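/- arXiv:math/0311399 — 5 statements merged into one kernel-verified Lean document; each statement's English description precedes it below -/
import Mathlib

section
/- For every n ≥ 2, L_p(n,2) = 2^{n−1} + n − 2. -/
/-- `p` is a pattern: its set of letters is exactly `{1, ..., k}` for some `k ≥ 1`. -/
def IsPattern (p : List ℕ) : Prop :=
  ∃ k : ℕ, 1 ≤ k ∧ ∀ x : ℕ, x ∈ p ↔ (1 ≤ x ∧ x ≤ k)

/-- `p` is a pattern all of whose letters lie in `[m] = {1, ..., m}`. -/
def PatternOver (m : ℕ) (p : List ℕ) : Prop :=
  IsPattern p ∧ ∀ x ∈ p, x ≤ m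

/-- An `n`-pattern word over `[m]`: a word over `[m]` each of whose
contiguous subwords of length `n` is a pattern. -/
def IsNPatternWord (n m : ℕ) (w : List ℕ) : Prop :=
  (∀ x ∈ w, 1 ≤ x ∧ x ≤ m) ∧ ∀ u : List ℕ, u <:+: w → u.length = n → IsPattern u

/-- A set `S` of patterns of length `n` over `[m]` is unavoidable if the set of
`n`-pattern words over `[m]` containing no element of `S` as a subword is finite. -/
def UnavoidableP (n m : ℕ) (S : Set (List ℕ)) : Prop :=
  {w : List ℕ | IsNPatternWord n m w ∧ ∀ s ∈ S, ¬ s <:+: w}.Finite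

/-- `Tp n m`: the number of conjugacy classes (under cyclic rotation) of
patterns of length `n` over `[m]`. -/
noncomputable def Tp (n m : ℕ) : ℕ :=
  {C : Set (List ℕ) | ∃ p : List ℕ, p.length = n ∧ PatternOver m p ∧
    C = {q : List ℕ | p ~r q}}.ncard

namespace DB

/-- window of `w` at position `p` of length `l` -/
def win (w : List ℕ) (p l : ℕ) : List ℕ := (w.drop p).take l

lemma win_length {w : List ℕ} {p l : ℕ} (h : p + l ≤ w.length) : (win w p l).length = l := by
  simp [win]; omega

lemma win_infix (w : List ℕ) (p l : ℕ) : win w p l <:+: w :=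
  ((w.drop p).take_prefix l).isInfix.trans (w.drop_suffix p).isInfix

lemma mem_win {w : List ℕ} {p l x : ℕ} (h : x ∈ win w p l) : x ∈ w :=
  (win_infix w p l).subset h

lemma infix_win {w s : List ℕ} (h : s <:+: w) :
    ∃ p, p + s.length ≤ w.length ∧ win w p s.length = s := by
  obtain ⟨t, r, rfl⟩ := h
  refine ⟨t.length, by simp, ?_⟩
  simp [win, List.drop_append_of_le_length, List.take_append_of_le_length]

lemma win_is_infix {w s : List ℕ} {p : ℕ} (h : p + s.length ≤ w.length)
    (hw : win w p s.length = s) : s <:+: w := hw ▸ win_infix w p s.length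

lemma win_append {w z : List ℕ} {p l : ℕ} (h : p + l ≤ w.length) :
    win (w ++ z) p l = win w p l := by
  unfold win
  rw [List.drop_append_of_le_length (by omega), List.take_append_of_le_length (by simp; omega)]

lemma win_add (w : List ℕ) (p a b : ℕ) : win w p (a + b) = win w p a ++ win w (p + a) b := by
  unfold win
  rw [List.take_add, List.drop_drop]

lemma win_take (w : List ℕ) (p : ℕ) {a l : ℕ} (h : a ≤ l) :
    (win w p l).take a = win w p a := by
  unfold win
  rw [List.take_take, min_eq_left h]

lemma win_drop (w : List ℕ) (p : ℕ) {a l : ℕ} (h : a ≤ l) :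
    (win w p l).drop a = win w (p + a) (l - a) := by
  unfold win
  rw [List.drop_take, List.drop_drop]

/-- letters of a window at a valid position: singleton windows -/
lemma win_one {w : List ℕ} {p : ℕ} (h : p < w.length) :
    ∃ x, x ∈ w ∧ win w p 1 = [x] := by
  have h1 : (win w p 1).length = 1 := win_length (by omega)
  match hw : win w p 1, h1 with
  | [x], _ => exact ⟨x, mem_win (by rw [hw]; exact List.mem_singleton_self x), rfl⟩

/-! ### encoding binary words as numbers -/

def enc (a : ℕ) (l : List ℕ) : ℕ := l.foldl (fun acc b => 2 * acc + (b - 1)) a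

@[simp] lemma enc_nil (a : ℕ) : enc a [] = a := rfl

@[simp] lemma enc_cons (a x : ℕ) (l : List ℕ) : enc a (x :: l) = enc (2 * a + (x - 1)) l := rfl

lemma enc_append (a : ℕ) (l1 l2 : List ℕ) : enc a (l1 ++ l2) = enc (enc a l1) l2 := by
  unfold enc; rw [List.foldl_append]

def TwoLetters (l : List ℕ) : Prop := ∀ x ∈ l, x = 1 ∨ x = 2

lemma enc_bounds {l : List ℕ} (hl : TwoLetters l) (a : ℕ) :
    a * 2 ^ l.length ≤ enc a l ∧ enc a l < (a + 1) * 2 ^ l.length := by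
  induction l generalizing a with
  | nil => simp
  | cons x t ih =>
    have hx : x = 1 ∨ x = 2 := hl x (by simp)
    have ht : TwoLetters t := fun y hy => hl y (by simp [hy])
    obtain ⟨h1, h2⟩ := ih ht (2 * a + (x - 1))
    constructor
    · have e : a * 2 ^ (x :: t).length = 2 * a * 2 ^ t.length := by
        simp [pow_succ]; ring
      rw [enc_cons, e]
      exact le_trans (Nat.mul_le_mul_right _ (by omega)) h1
    · have e : (a + 1) * 2 ^ (x :: t).length = (2 * a + 2) * 2 ^ t.length := by
        simp [pow_succ]; ring
      rw [enc_cons, e]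
      exact lt_of_lt_of_le h2 (Nat.mul_le_mul_right _ (by omega))

lemma enc_lt {l : List ℕ} (hl : TwoLetters l) : enc 0 l < 2 ^ l.length := by
  have := (enc_bounds hl 0).2; simpa using this

lemma enc_base_inj {l1 l2 : List ℕ} (hlen : l1.length = l2.length)
    (h1 : TwoLetters l1) (h2 : TwoLetters l2) {a1 a2 : ℕ} (h : enc a1 l1 = enc a2 l2) :
    a1 = a2 := by
  have b1 := enc_bounds h1 a1
  have b2 := enc_bounds h2 a2
  rw [hlen] at b1
  have e1 : a1 * 2 ^ l2.length < (a2 + 1) * 2 ^ l2.length := by omega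
  have e2 : a2 * 2 ^ l2.length < (a1 + 1) * 2 ^ l2.length := by omega
  have p : 0 < 2 ^ l2.length := Nat.pow_pos (by norm_num)
  have := (Nat.mul_lt_mul_right p).mp e1
  have := (Nat.mul_lt_mul_right p).mp e2
  omega

lemma enc_inj {l1 l2 : List ℕ} (hlen : l1.length = l2.length)
    (h1 : TwoLetters l1) (h2 : TwoLetters l2) (a : ℕ) (h : enc a l1 = enc a l2) :
    l1 = l2 := by
  induction l1 generalizing l2 a with
  | nil => cases l2 with
    | nil => rfl
    | cons y t => simp at hlen
  | cons x t ih =>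
    cases l2 with
    | nil => simp at hlen
    | cons y s =>
      simp only [enc_cons] at h
      have hlen' : t.length = s.length := by simpa using hlen
      have hxt : TwoLetters t := fun z hz => h1 z (by simp [hz])
      have hys : TwoLetters s := fun z hz => h2 z (by simp [hz])
      have hb : 2 * a + (x - 1) = 2 * a + (y - 1) := enc_base_inj hlen' hxt hys h
      have hx : x = 1 ∨ x = 2 := h1 x (by simp)
      have hy : y = 1 ∨ y = 2 := h2 y (by simp)
      have hxy : x = y := by omega
      subst hxy
      rw [hb] at h
      rw [ih hlen' hxt hys _ h]

lemma enc_surj : ∀ (m r : ℕ), r < 2 ^ m →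
    ∃ l : List ℕ, l.length = m ∧ TwoLetters l ∧ enc 0 l = r := by
  intro m
  induction m with
  | zero => intro r hr; interval_cases r; exact ⟨[], rfl, by intro x hx; simp at hx, rfl⟩
  | succ k ih =>
    intro r hr
    obtain ⟨l, hlen, hlet, henc⟩ := ih (r / 2) (by
      have : 2 ^ (k+1) = 2 ^ k * 2 := pow_succ 2 k
      omega)
    refine ⟨l ++ [r % 2 + 1], by simp [hlen], ?_, ?_⟩
    · intro x hx
      rcases List.mem_append.mp hx with h | h
      · exact hlet x h
      · simp at h; omega
    · rw [enc_append, henc]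
      simp [enc]
      omega

/-! ### finiteness of bounded words -/

lemma finite_bounded_words (L : ℕ) : {l : List ℕ | l.length ≤ L ∧ ∀ x ∈ l, x ≤ 2}.Finite := by
  have hfin : {l : List (Fin 3) | l.length ≤ L}.Finite := List.finite_length_le (Fin 3) L
  have : {l : List ℕ | l.length ≤ L ∧ ∀ x ∈ l, x ≤ 2} ⊆
      (fun l : List (Fin 3) => l.map Fin.val) '' {l : List (Fin 3) | l.length ≤ L} := by
    intro v ⟨hv1, hv2⟩
    refine ⟨v.map (fun x => (⟨x % 3, Nat.mod_lt _ (by norm_num)⟩ : Fin 3)), by simpa using hv1, ?_⟩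
    simp only [List.map_map]
    conv_rhs => rw [← List.map_id v]
    apply List.map_congr_left
    intro x hx
    have := hv2 x hx
    simp [Nat.mod_eq_of_lt (by omega : x < 3)]
  exact (hfin.image _).subset this


lemma take_eq_take_of_le {B : List ℕ} (A : List ℕ) {q c : ℕ} (h : q ≤ A.length + c) :
    (A ++ B).take q = (A ++ B.take c).take q := by
  rw [List.take_append, List.take_append, List.take_take,
    min_eq_left (by omega)]

/-- splitting lemma -/
lemma infix_split {A B s : List ℕ} {n : ℕ} (hn : 1 ≤ n) (hs : s.length = n)
    (h : s <:+: A ++ B) : s <:+: B ∨ s <:+: A ++ B.take (n - 1) := by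
  obtain ⟨t, r, ht⟩ := h
  by_cases hcase : A.length ≤ t.length
  · left
    have h2 : (t ++ (s ++ r)).drop A.length = (A ++ B).drop A.length := by
      rw [← List.append_assoc, ht]
    rw [List.drop_append_of_le_length hcase, List.drop_left] at h2
    exact ⟨t.drop A.length, r, by rw [List.append_assoc, h2]⟩
  · right
    push_neg at hcase
    have key : (A ++ B).take (t.length + n) = t ++ s := by
      rw [← ht, List.append_assoc, List.take_append,
        List.take_of_length_le (by omega), Nat.add_sub_cancel_left, ← hs, List.take_left]
    have key2 : (A ++ B.take (n - 1)).take (t.length + n) = t ++ s := by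
      rw [← take_eq_take_of_le A (by omega), key]
    exact ((List.suffix_append t s).isInfix.trans
      (key2 ▸ (List.take_prefix _ _).isInfix))


section Pumping

variable {n : ℕ} {w : List ℕ} {i j : ℕ}

/-- The pumped words: all their length-`n` infixes are infixes of `w`. -/
lemma pump_main (hn : 2 ≤ n) (hij : i < j) (hj : j + (n - 1) ≤ w.length)
    (heq : win w i (n - 1) = win w j (n - 1)) :
    ∃ f : ℕ → List ℕ,
      (∀ k, (f k).length = i + (k + 1) * (j - i) + (n - 1) + (w.length - (j + (n - 1)))) ∧
      (∀ k, ∀ x ∈ f k, x ∈ w) ∧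
      (∀ k s, s.length = n → s <:+: f k → s <:+: w) := by
  set d := j - i with hd
  have hdpos : 1 ≤ d := by omega
  set a := w.take i with ha
  set x := (w.drop i).take d with hx
  set u := win w j (n - 1) with hu
  set c := w.drop (j + (n - 1)) with hc
  set z := (w.drop i).take (d + (n - 1)) with hz
  set y := z.drop (n - 1) with hy
  have hxlen : x.length = d := by
    simp [hx]; omega
  have hulen : u.length = n - 1 := win_length hj
  have hzlen : z.length = d + (n - 1) := by
    simp [hz]; omega
  have hylen : y.length = d := by rw [hy, List.length_drop, hzlen]; omega
  have hztake : z.take d = x := by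
    rw [hz, hx, List.take_take, min_eq_left (by omega)]
  have hzdrop : z.drop d = u := by
    have e1 : d + (n - 1) - d = n - 1 := by omega
    have e2 : i + d = j := by omega
    rw [hz, List.drop_take, List.drop_drop, e1, e2, hu]
    rfl
  have hzxu : z = x ++ u := by rw [← hztake, ← hzdrop, List.take_append_drop]
  have hztake' : z.take (n - 1) = u := by
    rw [hz, List.take_take, min_eq_left (by omega), ← heq]
    rfl
  have hzuy : z = u ++ y := by rw [← hztake', hy, List.take_append_drop]
  have hxu : x ++ u = u ++ y := by rw [← hzxu, hzuy]
  have hw : w = a ++ x ++ u ++ c := by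
    have h1 : a ++ x = w.take j := by
      rw [ha, hx, ← List.take_add]
      congr 1; omega
    have h2 : u ++ c = w.drop j := by
      rw [hu, hc]
      unfold win
      rw [← List.drop_drop]
      exact List.take_append_drop _ _
    rw [List.append_assoc, h2, h1, List.take_append_drop]
  -- iterated x
  set repx : ℕ → List ℕ := fun k => (List.replicate k x).flatten with hrepx
  have hrepx0 : repx 0 = [] := rfl
  have hrepxS : ∀ k, repx (k + 1) = x ++ repx k := by
    intro k; simp [hrepx, List.replicate_succ]
  have hrepxlen : ∀ k, (repx k).length = k * d := by
    intro k; induction k with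
    | zero => simp [hrepx0]
    | succ k ih => rw [hrepxS, List.length_append, ih, hxlen]; ring
  have hrepmem : ∀ k, ∀ t ∈ repx k, t ∈ x := by
    intro k t ht
    obtain ⟨l, hl, htl⟩ := List.mem_flatten.mp ht
    rwa [(List.eq_of_mem_replicate hl)] at htl
  -- key identity
  have hkey : ∀ k, repx k ++ u = u ++ (List.replicate k y).flatten := by
    intro k; induction k with
    | zero => simp [hrepx0]
    | succ k ih =>
      rw [hrepxS, List.replicate_succ, List.flatten_cons, List.append_assoc, ih,
        ← List.append_assoc, hxu, List.append_assoc]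
  set f : ℕ → List ℕ := fun k => a ++ repx (k + 1) ++ u ++ c with hf
  have hmem : ∀ k, ∀ t ∈ f k, t ∈ w := by
    intro k t ht
    rw [hw]
    simp only [hf, List.mem_append] at ht ⊢
    rcases ht with ((h | h) | h) | h
    · exact Or.inl (Or.inl (Or.inl h))
    · exact Or.inl (Or.inl (Or.inr (hrepmem _ _ h)))
    · exact Or.inl (Or.inr h)
    · exact Or.inr h
  have hlen : ∀ k, (f k).length = i + (k + 1) * d + (n - 1) + c.length := by
    intro k
    simp [hf, hrepxlen, hulen, ha]
    have : i ≤ w.length := by omega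
    omega
  have hinf : ∀ k s, s.length = n → s <:+: f k → s <:+: w := by
    intro k
    induction k with
    | zero =>
      intro s _ hs
      have hf0 : f 0 = w := by
        simp only [hf]
        rw [hrepxS, hrepx0, List.append_nil, hw]
      rwa [hf0] at hs
    | succ k ih =>
      intro s hslen hs
      have hsplit : s <:+: (repx (k + 1) ++ (u ++ c)) ∨
          s <:+: (a ++ x) ++ (repx (k + 1) ++ (u ++ c)).take (n - 1) := by
        apply infix_split (by omega) hslen
        have : (a ++ x) ++ (repx (k + 1) ++ (u ++ c)) = f (k + 1) := by
          show _ = a ++ repx (k + 1 + 1) ++ u ++ c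
          rw [hrepxS (k + 1)]
          simp [List.append_assoc]
        rwa [this]
      rcases hsplit with h | h
      · exact ih s hslen (h.trans ⟨a, [], by simp [hf, List.append_assoc]⟩)
      · have htk : (repx (k + 1) ++ (u ++ c)).take (n - 1) = u := by
          rw [← List.append_assoc, List.take_append_of_le_length (by
            rw [List.length_append, hrepxlen, hulen]; omega)]
          rw [List.take_append]
          have h1 : (repx (k+1)).take (n-1) ++ u.take (n - 1 - (repx (k+1)).length)
              = (u ++ (List.replicate (k+1) y).flatten).take (n-1) := by
            rw [← List.take_append, hkey]
          rw [h1, List.take_append_of_le_length (by omega), List.take_of_length_le (by omega)]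
        rw [htk] at h
        refine h.trans ⟨[], c, ?_⟩
        rw [hw]; simp [List.append_assoc]
  have hclen : c.length = w.length - (j + (n - 1)) := by simp [hc]
  exact ⟨f, fun k => by rw [hlen k, hclen], hmem, hinf⟩

end Pumping


section Upper

lemma winInj_of_unavoidable {n : ℕ} (hn : 2 ≤ n) {S : Set (List ℕ)}
    (hS : ∀ p ∈ S, p.length = n) (hU : UnavoidableP n 2 S) {w : List ℕ}
    (hw : IsNPatternWord n 2 w) (hav : ∀ s ∈ S, ¬ s <:+: w) :
    ∀ p q, p + (n - 1) ≤ w.length → q + (n - 1) ≤ w.length →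
      win w p (n - 1) = win w q (n - 1) → p = q := by
  have main : ∀ p q, p < q → q + (n - 1) ≤ w.length →
      win w p (n - 1) = win w q (n - 1) → False := by
    intro p q hpq hq heq
    obtain ⟨f, hlen, hmem, hinf⟩ := pump_main hn hpq hq heq
    have hTmem : ∀ k, f k ∈ {v : List ℕ | IsNPatternWord n 2 v ∧ ∀ s ∈ S, ¬ s <:+: v} := by
      intro k
      refine ⟨⟨fun x hx => hw.1 x (hmem k x hx), fun u hu hulen => hw.2 u (hinf k u hulen hu) hulen⟩,
        fun s hs hcon => hav s hs (hinf k s (hS s hs) hcon)⟩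
    have hinjf : Function.Injective f := by
      intro k1 k2 hk
      have := hlen k1
      rw [hk, hlen k2] at this
      have : (k1 + 1) * (q - p) = (k2 + 1) * (q - p) := by omega
      have hqp : 1 ≤ q - p := by omega
      nlinarith
    exact hU.not_infinite (Set.infinite_of_injective_forall_mem hinjf hTmem)
  intro p q hp hq heq
  rcases lt_trichotomy p q with h | h | h
  · exact absurd (main p q h hq heq) (by simp)
  · exact h
  · exact absurd (main q p h hp heq.symm) (by simp)

lemma length_le_of_winInj {n : ℕ} (hn : 2 ≤ n) {w : List ℕ}
    (hletters : ∀ x ∈ w, 1 ≤ x ∧ x ≤ 2)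
    (hinj : ∀ p q, p + (n - 1) ≤ w.length → q + (n - 1) ≤ w.length →
      win w p (n - 1) = win w q (n - 1) → p = q) :
    w.length ≤ 2 ^ (n - 1) + n - 2 := by
  have hpow : 1 ≤ 2 ^ (n - 1) := Nat.one_le_two_pow
  by_cases hlen : w.length < n - 1
  · omega
  push_neg at hlen
  have htwo : ∀ p, p + (n - 1) ≤ w.length → TwoLetters (win w p (n - 1)) := by
    intro p hp x hx
    have := hletters x (mem_win hx)
    omega
  have hcard : (Finset.range (w.length - (n - 1) + 1)).card ≤ (Finset.range (2 ^ (n - 1))).card := by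
    apply Finset.card_le_card_of_injOn (fun p => enc 0 (win w p (n - 1)))
    · intro p hp
      simp only [Finset.coe_range, Set.mem_Iio, Finset.mem_coe, Finset.mem_range] at hp ⊢
      have hple : p + (n - 1) ≤ w.length := by omega
      have := enc_lt (htwo p hple)
      rwa [win_length hple] at this
    · intro p hp q hq hpq
      simp only [Finset.coe_range, Set.mem_Iio, Finset.mem_coe, Finset.mem_range] at hp hq
      have hple : p + (n - 1) ≤ w.length := by omega
      have hqle : q + (n - 1) ≤ w.length := by omega
      refine hinj p q hple hqle ?_
      exact enc_inj (by rw [win_length hple, win_length hqle]) (htwo p hple) (htwo q hqle) 0 hpq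
  simp only [Finset.card_range] at hcard
  omega

end Upper


section Counting

/-- number of occurrences of `e` as a window of `w` -/
def cnt (w e : List ℕ) : ℕ :=
  ((Finset.range (w.length + 1 - e.length)).filter (fun p => win w p e.length = e)).card

lemma cnt_pos_iff {w e : List ℕ} : 0 < cnt w e ↔ e <:+: w := by
  constructor
  · intro h
    obtain ⟨p, hp⟩ := Finset.card_pos.mp h
    simp only [Finset.mem_filter, Finset.mem_range] at hp
    exact win_is_infix (by omega) hp.2
  · intro h
    obtain ⟨p, hple, hpw⟩ := infix_win h
    apply Finset.card_pos.mpr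
    exact ⟨p, Finset.mem_filter.mpr ⟨Finset.mem_range.mpr (by omega), hpw⟩⟩

/-- distinctness of `m`-windows -/
def WinInj (w : List ℕ) (m : ℕ) : Prop :=
  ∀ p q, p + m ≤ w.length → q + m ≤ w.length → win w p m = win w q m → p = q

lemma cnt_le_one {w : List ℕ} {m : ℕ} (hinj : WinInj w m) {e : List ℕ} (he : e.length = m) :
    cnt w e ≤ 1 := by
  apply Finset.card_le_one.mpr
  intro p hp q hq
  simp only [Finset.mem_filter, Finset.mem_range, he] at hp hq
  exact hinj p q (by omega) (by omega) (by rw [hp.2, hq.2])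

lemma cnt_eq_one {w : List ℕ} {m : ℕ} (hinj : WinInj w m) {e : List ℕ} (he : e.length = m)
    (hocc : e <:+: w) : cnt w e = 1 := by
  have h1 := cnt_le_one hinj he
  have h2 := cnt_pos_iff.mpr hocc
  omega

variable {w : List ℕ} {m : ℕ}

/-- counts of `m`-windows starting / ending with a given `(m-1)`-word `v` -/
def OutC (w : List ℕ) (m : ℕ) (v : List ℕ) : ℕ :=
  ((Finset.range (w.length + 1 - m)).filter (fun p => win w p (m - 1) = v)).card

def InC (w : List ℕ) (m : ℕ) (v : List ℕ) : ℕ :=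
  ((Finset.range (w.length + 1 - m)).filter (fun p => win w (p + 1) (m - 1) = v)).card

lemma balance (hm : 1 ≤ m) (hmw : m ≤ w.length + 1) (v : List ℕ) :
    OutC w m v + (if win w (w.length + 1 - m) (m - 1) = v then 1 else 0)
    = InC w m v + (if win w 0 (m - 1) = v then 1 else 0) := by
  classical
  have hK : w.length + 1 - (m - 1) = (w.length + 1 - m) + 1 := by omega
  have hN : ∀ α : ℕ, True := fun _ => trivial
  have lhs : OutC w m v + (if win w (w.length + 1 - m) (m - 1) = v then 1 else 0)
      = ∑ p ∈ Finset.range ((w.length + 1 - m) + 1),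
          (if win w p (m - 1) = v then 1 else 0) := by
    rw [Finset.sum_range_succ, OutC, Finset.card_filter]
  have rhs : InC w m v + (if win w 0 (m - 1) = v then 1 else 0)
      = ∑ p ∈ Finset.range ((w.length + 1 - m) + 1),
          (if win w p (m - 1) = v then 1 else 0) := by
    rw [Finset.sum_range_succ' (fun p => if win w p (m - 1) = v then 1 else 0), InC,
      Finset.card_filter]
  rw [lhs, rhs]

lemma out_split (hm : 1 ≤ m) (hlet : TwoLetters w) {v : List ℕ} (hv : v.length = m - 1) :
    OutC w m v = cnt w (v ++ [1]) + cnt w (v ++ [2]) := by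
  classical
  have hpoint : ∀ p ∈ Finset.range (w.length + 1 - m),
      (win w p (m - 1) = v ↔ (win w p m = v ++ [1] ∨ win w p m = v ++ [2])) := by
    intro p hp
    simp only [Finset.mem_range] at hp
    have hpm : p + m ≤ w.length := by omega
    have hsplit : win w p m = win w p (m - 1) ++ win w (p + (m - 1)) 1 := by
      rw [← win_add]
      congr 1
      omega
    obtain ⟨xx, hxw, hx1⟩ := win_one (show p + (m - 1) < w.length by omega)
    constructor
    · intro h
      rcases hlet xx hxw with h2 | h2 <;> [left; right] <;>
        rw [hsplit, h, hx1, h2]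
    · intro h
      rcases h with h | h <;>
      · have := congrArg (List.take (m - 1)) h
        rwa [win_take w p (by omega), List.take_append_of_le_length (by omega),
          List.take_of_length_le (by omega)] at this
  have : OutC w m v = ((Finset.range (w.length + 1 - m)).filter
      (fun p => win w p m = v ++ [1] ∨ win w p m = v ++ [2])).card := by
    rw [OutC]
    congr 1
    apply Finset.filter_congr
    intro p hp
    exact hpoint p hp
  have hdisj : Disjoint
      ((Finset.range (w.length + 1 - m)).filter (fun p => win w p m = v ++ [1]))
      ((Finset.range (w.length + 1 - m)).filter (fun p => win w p m = v ++ [2])) := by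
    rw [Finset.disjoint_left]
    intro p h1 h2
    rw [Finset.mem_filter] at h1 h2
    have := h1.2.symm.trans h2.2
    simp at this
  have hm1 : v.length + 1 = m := by omega
  rw [this, Finset.filter_or, Finset.card_union_of_disjoint hdisj, cnt, cnt]
  simp only [List.length_append, List.length_singleton, hm1]

lemma in_split (hm : 1 ≤ m) (hlet : TwoLetters w) {v : List ℕ} (hv : v.length = m - 1) :
    InC w m v = cnt w (1 :: v) + cnt w (2 :: v) := by
  classical
  have hpoint : ∀ p ∈ Finset.range (w.length + 1 - m),
      (win w (p + 1) (m - 1) = v ↔ (win w p m = 1 :: v ∨ win w p m = 2 :: v)) := by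
    intro p hp
    simp only [Finset.mem_range] at hp
    have hpm : p + m ≤ w.length := by omega
    have hsplit : win w p m = win w p 1 ++ win w (p + 1) (m - 1) := by
      rw [← win_add]
      congr 1
      omega
    obtain ⟨xx, hxw, hx1⟩ := win_one (show p < w.length by omega)
    constructor
    · intro h
      rcases hlet xx hxw with h2 | h2 <;> [left; right] <;>
        rw [hsplit, h, hx1, h2] <;> rfl
    · intro h
      rcases h with h | h <;>
      · have := congrArg (List.drop 1) h
        rwa [win_drop w p (by omega), List.drop_one, List.tail_cons] at this
  have : InC w m v = ((Finset.range (w.length + 1 - m)).filter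
      (fun p => win w p m = 1 :: v ∨ win w p m = 2 :: v)).card := by
    rw [InC]
    congr 1
    apply Finset.filter_congr
    intro p hp
    exact hpoint p hp
  have hdisj : Disjoint
      ((Finset.range (w.length + 1 - m)).filter (fun p => win w p m = 1 :: v))
      ((Finset.range (w.length + 1 - m)).filter (fun p => win w p m = 2 :: v)) := by
    rw [Finset.disjoint_left]
    intro p h1 h2
    rw [Finset.mem_filter] at h1 h2
    have := h1.2.symm.trans h2.2
    simp at this
  have hm1 : v.length + 1 = m := by omega
  rw [this, Finset.filter_or, Finset.card_union_of_disjoint hdisj, cnt, cnt]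
  simp only [List.length_cons, hm1]

end Counting


section Greedy

variable {m : ℕ}

lemma winInj_length {w : List ℕ} (hm : 1 ≤ m) (hlet : TwoLetters w) (hinj : WinInj w m) :
    w.length ≤ 2 ^ m + m - 1 := by
  have hpow : 1 ≤ 2 ^ m := Nat.one_le_two_pow
  by_cases hlen : w.length < m
  · omega
  push_neg at hlen
  have htwo : ∀ p, p + m ≤ w.length → TwoLetters (win w p m) :=
    fun p hp x hx => hlet x (mem_win hx)
  have hcard : (Finset.range (w.length - m + 1)).card ≤ (Finset.range (2 ^ m)).card := by
    apply Finset.card_le_card_of_injOn (fun p => enc 0 (win w p m))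
    · intro p hp
      simp only [Finset.coe_range, Set.mem_Iio, Finset.mem_coe, Finset.mem_range] at hp ⊢
      have hple : p + m ≤ w.length := by omega
      have := enc_lt (htwo p hple)
      rwa [win_length hple] at this
    · intro p hp q hq hpq
      simp only [Finset.coe_range, Set.mem_Iio] at hp hq
      have hple : p + m ≤ w.length := by omega
      have hqle : q + m ≤ w.length := by omega
      refine hinj p q hple hqle ?_
      exact enc_inj (by rw [win_length hple, win_length hqle]) (htwo p hple) (htwo q hqle) 0 hpq
  simp only [Finset.card_range] at hcard
  omega

/-- greedy-consistent words -/
def GP (m : ℕ) (w : List ℕ) : Prop :=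
  w.take m = List.replicate m 1 ∧ TwoLetters w ∧ WinInj w m ∧
  ∀ q, m ≤ q → q < w.length → win w q 1 = [1] →
    (win w (q + 1 - m) (m - 1) ++ [2]) <:+: w

lemma GP_length {w : List ℕ} (h : GP m w) : m ≤ w.length := by
  have := congrArg List.length h.1
  simp at this
  omega

lemma GP_seed : GP m (List.replicate m 1) := by
  refine ⟨by simp, by intro x hx; exact Or.inl (List.eq_of_mem_replicate hx), ?_, ?_⟩
  · intro p q hp hq _
    simp at hp hq
    omega
  · intro q hq hq2
    simp at hq2
    omega

lemma GP_finite : {w : List ℕ | GP m w}.Finite := by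
  by_cases hm : 1 ≤ m
  · apply (finite_bounded_words (2 ^ m + m - 1)).subset
    intro w hw
    refine ⟨winInj_length hm hw.2.1 hw.2.2.1, fun x hx => ?_⟩
    rcases hw.2.1 x hx with h | h <;> omega
  · have hm0 : m = 0 := by omega
    subst hm0
    apply (finite_bounded_words 0).subset
    intro w hw
    have := hw.2.2.1 0 w.length (by simp) (by simp) (by simp [win])
    refine ⟨by omega, fun x hx => ?_⟩
    rcases hw.2.1 x hx with h | h <;> omega

/-- appending a letter to a greedy word -/
lemma GP_append {w : List ℕ} (hm : 2 ≤ m) (hGP : GP m w) (c : ℕ) (hc : c = 1 ∨ c = 2)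
    (hnew : ¬ (win w (w.length + 1 - m) (m - 1) ++ [c]) <:+: w)
    (hcond : c = 1 → (win w (w.length + 1 - m) (m - 1) ++ [2]) <:+: w) :
    GP m (w ++ [c]) := by
  obtain ⟨hseed, hlet, hinj, hgreedy⟩ := hGP
  have hmL : m ≤ w.length := GP_length ⟨hseed, hlet, hinj, hgreedy⟩
  set L := w.length with hL
  set K := L + 1 - m with hK
  set vend := win w K (m - 1) with hvend
  have hvlen : vend.length = m - 1 := win_length (by omega)
  -- the new window
  have hdropK : w.drop K ++ [c] = vend ++ [c] := by
    rw [hvend]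
    unfold win
    rw [List.take_of_length_le (by simp [hK]; omega)]
  have hwinnew : win (w ++ [c]) K m = vend ++ [c] := by
    unfold win
    rw [List.drop_append_of_le_length (by omega), hdropK]
    exact List.take_of_length_le (by simp [hvlen]; omega)
  have hwinold : ∀ p l, p + l ≤ L → win (w ++ [c]) p l = win w p l :=
    fun p l hp => win_append hp
  refine ⟨?_, ?_, ?_, ?_⟩
  · rw [List.take_append_of_le_length (by omega)]
    exact hseed
  · intro x hx
    rcases List.mem_append.mp hx with h | h
    · exact hlet x h
    · simp at h; omega
  · intro p q hp hq heq
    simp only [List.length_append, List.length_singleton] at hp hq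
    rcases Nat.lt_or_ge (p + m) (L + 1) with h1 | h1 <;> rcases Nat.lt_or_ge (q + m) (L + 1) with h2 | h2
    · exact hinj p q (by omega) (by omega) (by rwa [hwinold p m (by omega), hwinold q m (by omega)] at heq)
    · exfalso
      have hq' : q = K := by omega
      rw [hq', hwinnew, hwinold p m (by omega)] at heq
      exact hnew (by rw [← heq]; exact win_infix w p m)
    · exfalso
      have hp' : p = K := by omega
      rw [hp', hwinnew, hwinold q m (by omega)] at heq
      exact hnew (by rw [heq]; exact win_infix w q m)
    · omega
  · intro q hq hq2 hq3
    simp only [List.length_append, List.length_singleton] at hq2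
    rcases Nat.lt_or_ge q L with hqL | hqL
    · have h1 : win (w ++ [c]) q 1 = win w q 1 := hwinold q 1 (by omega)
      have h2 : win (w ++ [c]) (q + 1 - m) (m - 1) = win w (q + 1 - m) (m - 1) :=
        hwinold _ _ (by omega)
      rw [h1] at hq3
      rw [h2]
      exact (hgreedy q hq hqL hq3).trans (List.prefix_append w [c]).isInfix
    · have hqeq : q = L := by omega
      have hwl : win (w ++ [c]) q 1 = [c] := by
        unfold win
        rw [hqeq, List.drop_append_of_le_length (le_refl _), List.drop_length]
        rfl
      rw [hwl] at hq3
      have hc1 : c = 1 := by injection hq3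
      have h2 : win (w ++ [c]) (q + 1 - m) (m - 1) = vend := by
        rw [hvend, hqeq]
        exact hwinold _ _ (by omega)
      rw [h2]
      exact (hcond hc1).trans (List.prefix_append w [c]).isInfix

/-- a maximal greedy word is "stuck": both extensions of its final vertex occur -/
lemma GP_stuck (hm : 2 ≤ m) :
    ∃ w : List ℕ, GP m w ∧
      (win w (w.length + 1 - m) (m - 1) ++ [1]) <:+: w ∧
      (win w (w.length + 1 - m) (m - 1) ++ [2]) <:+: w := by
  obtain ⟨w, hwG, hwmax⟩ := Set.Finite.exists_maximalFor List.length _ GP_finite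
    ⟨List.replicate m 1, GP_seed⟩
  have hmax : ∀ c, c = 1 ∨ c = 2 → ¬ GP m (w ++ [c]) := by
    intro c _ hcon
    have := hwmax hcon (by simp)
    simp at this
  have h2 : (win w (w.length + 1 - m) (m - 1) ++ [2]) <:+: w := by
    by_contra hnot
    exact hmax 2 (Or.inr rfl) (GP_append hm hwG 2 (Or.inr rfl) hnot (by intro h; exact absurd h (by norm_num)))
  have h1 : (win w (w.length + 1 - m) (m - 1) ++ [1]) <:+: w := by
    by_contra hnot
    exact hmax 1 (Or.inl rfl) (GP_append hm hwG 1 (Or.inl rfl) hnot (fun _ => h2))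
  exact ⟨w, hwG, h1, h2⟩

end Greedy


section DeBruijn

lemma singleton_of_length_one {l : List ℕ} (h : l.length = 1) : ∃ x, l = [x] := by
  match l, h with
  | [x], _ => exact ⟨x, rfl⟩

theorem deBruijn_exists {m : ℕ} (hm : 1 ≤ m) :
    ∃ w : List ℕ, TwoLetters w ∧ WinInj w m ∧ w.length = 2 ^ m + m - 1 := by
  rcases Nat.lt_or_ge m 2 with hm2 | hm2
  · -- m = 1
    have hm1 : m = 1 := by omega
    subst hm1
    refine ⟨[1, 2], by intro x hx; simp at hx; omega, ?_, by norm_num⟩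
    intro p q hp hq heq
    simp only [List.length_cons, List.length_nil] at hp hq
    have hp' : p = 0 ∨ p = 1 := by omega
    have hq' : q = 0 ∨ q = 1 := by omega
    rcases hp' with rfl | rfl <;> rcases hq' with rfl | rfl <;> first
      | rfl
      | (exfalso; simp [win] at heq)
  -- m ≥ 2
  obtain ⟨w, hGP, h1, h2⟩ := GP_stuck hm2
  obtain ⟨hseed, hlet, hinj, hgreedy⟩ := hGP
  have hmL : m ≤ w.length := GP_length ⟨hseed, hlet, hinj, hgreedy⟩
  have hKlen : (w.length + 1 - m) + (m - 1) ≤ w.length := by omega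
  have hvendlen : (win w (w.length + 1 - m) (m - 1)).length = m - 1 := win_length hKlen
  have hprefix : win w 0 (m - 1) = List.replicate (m - 1) 1 := by
    have h0 : win w 0 (m - 1) = (w.take m).take (m - 1) := by
      unfold win
      rw [List.drop_zero, List.take_take, min_eq_left (by omega)]
    rw [h0, hseed, List.take_replicate, min_eq_left (by omega)]
  have hseedwin : win w 0 m = List.replicate m 1 := by
    unfold win
    rw [List.drop_zero]
    exact hseed
  have hseedcnt : 0 < cnt w (List.replicate m 1) := by
    apply cnt_pos_iff.mpr
    rw [← hseedwin]
    exact win_infix w 0 m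
  have hrepm : List.replicate (m - 1) 1 ++ [1] = List.replicate m 1 := by
    rw [← List.replicate_succ' (n := m - 1) (a := 1)]
    congr 1
    omega
  -- Step 1 : the final vertex is all ones
  have step1 : win w (w.length + 1 - m) (m - 1) = List.replicate (m - 1) 1 := by
    by_contra hne
    have hb := balance (w := w) (m := m) (by omega) (by omega) (win w (w.length + 1 - m) (m - 1))
    rw [if_pos rfl, if_neg (fun hcon => hne (by rw [← hcon, hprefix]))] at hb
    have ho := out_split (w := w) (by omega) hlet hvendlen
    have hi := in_split (w := w) (by omega) hlet hvendlen
    have hc1 : cnt w (win w (w.length + 1 - m) (m - 1) ++ [1]) = 1 :=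
      cnt_eq_one hinj (by simp [hvendlen]; omega) h1
    have hc2 : cnt w (win w (w.length + 1 - m) (m - 1) ++ [2]) = 1 :=
      cnt_eq_one hinj (by simp [hvendlen]; omega) h2
    have hin1 : cnt w (1 :: win w (w.length + 1 - m) (m - 1)) ≤ 1 :=
      cnt_le_one hinj (by simp [hvendlen]; omega)
    have hin2 : cnt w (2 :: win w (w.length + 1 - m) (m - 1)) ≤ 1 :=
      cnt_le_one hinj (by simp [hvendlen]; omega)
    omega
  rw [step1] at h1 h2
  -- the U-propagation lemma
  have hlemU : ∀ v : List ℕ, v.length = m - 1 → v ≠ List.replicate (m - 1) 1 →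
      cnt w (v ++ [2]) = 0 → cnt w (v ++ [1]) = 0 := by
    intro v hvl hvne hv2
    by_contra hpos
    obtain ⟨p, hple, hpw⟩ := infix_win (cnt_pos_iff.mp (Nat.pos_of_ne_zero hpos))
    have hlen1 : (v ++ [1]).length = m := by simp [hvl]; omega
    rw [hlen1] at hple hpw
    rcases Nat.eq_zero_or_pos p with hp0 | hp0
    · subst hp0
      rw [hseedwin] at hpw
      apply hvne
      have := congrArg (List.take (m - 1)) hpw.symm
      rwa [List.take_append_of_le_length (by omega), List.take_of_length_le (by omega),
        List.take_replicate, min_eq_left (by omega)] at this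
    · have hq : m ≤ p + m - 1 := by omega
      have hlast : win w (p + m - 1) 1 = [1] := by
        have hd := win_drop w p (show m - 1 ≤ m by omega)
        rw [hpw] at hd
        have he1 : m - (m - 1) = 1 := by omega
        have he2 : p + (m - 1) = p + m - 1 := by omega
        rw [he1, he2] at hd
        rw [← hd, ← hvl, List.drop_left]
      have hginst := hgreedy (p + m - 1) hq (by omega) hlast
      have hpeq : p + m - 1 + 1 - m = p := by omega
      rw [hpeq] at hginst
      have hwp : win w p (m - 1) = v := by
        have := win_take w p (show m - 1 ≤ m by omega)
        rw [hpw] at this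
        rw [← this, ← hvl, List.take_left]
      rw [hwp] at hginst
      have := cnt_pos_iff.mpr hginst
      omega
  -- Step 2 : completeness
  have complete : ∀ e : List ℕ, e.length = m → TwoLetters e → e <:+: w := by
    intro e hel helet
    by_contra hnot
    have he0 : cnt w e = 0 := by
      rcases Nat.eq_zero_or_pos (cnt w e) with h | h
      · exact h
      · exact absurd (cnt_pos_iff.mp h) hnot
    have claim : ∀ j, j ≤ m - 1 → ∃ v : List ℕ, v.length = m - 1 ∧ TwoLetters v ∧
        v.drop (m - 1 - j) = List.replicate j 1 ∧ cnt w (v ++ [1]) = 0 := by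
      intro j
      induction j with
      | zero =>
        intro _
        obtain ⟨el, hel1⟩ := singleton_of_length_one
          (show (e.drop (m - 1)).length = 1 by rw [List.length_drop, hel]; omega)
        have hesplit : e = e.take (m - 1) ++ [el] := by
          conv_lhs => rw [← List.take_append_drop (m - 1) e]
          rw [hel1]
        have hvlen : (e.take (m - 1)).length = m - 1 := by
          rw [List.length_take]
          omega
        have hvlet : TwoLetters (e.take (m - 1)) :=
          fun x hx => helet x (List.mem_of_mem_take hx)
        have hdrop0 : (e.take (m - 1)).drop (m - 1 - 0) = List.replicate 0 1 := by
          simp only [Nat.sub_zero, List.replicate_zero]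
          exact List.drop_eq_nil_of_le (le_of_eq hvlen)
        have helmem : el ∈ e := List.mem_of_mem_drop (by rw [hel1]; exact List.mem_singleton_self el)
        rcases helet el helmem with h | h
        · subst h
          exact ⟨e.take (m - 1), hvlen, hvlet, hdrop0, by rw [← hesplit]; exact he0⟩
        · subst h
          by_cases hrep : e.take (m - 1) = List.replicate (m - 1) 1
          · exact absurd (by rw [hesplit, hrep]; exact h2) hnot
          · exact ⟨e.take (m - 1), hvlen, hvlet, hdrop0,
              hlemU _ hvlen hrep (by rw [← hesplit]; exact he0)⟩
      | succ j ih =>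
        intro hj1
        obtain ⟨v, hv1, hv2, hv3, hv4⟩ := ih (by omega)
        clear ih
        obtain ⟨vh, vt, rfl⟩ : ∃ a t, v = a :: t := by
          cases v with
          | nil => rw [List.length_nil] at hv1; omega
          | cons a t => exact ⟨a, t, rfl⟩
        have hvtlen : vt.length = m - 2 := by rw [List.length_cons] at hv1; omega
        have hv'len : (vt ++ [1]).length = m - 1 := by simp [hvtlen]; omega
        have hv'let : TwoLetters (vt ++ [1]) := by
          intro x hx
          rcases List.mem_append.mp hx with h | h
          · exact hv2 x (List.mem_cons_of_mem vh h)
          · simp at h; omega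
        have hkey0 : cnt w (vh :: (vt ++ [1])) = 0 := by
          rw [← List.cons_append]
          exact hv4
        have hvh : vh = 1 ∨ vh = 2 := hv2 vh List.mem_cons_self
        have hIn : InC w m (vt ++ [1]) ≤ 1 := by
          rw [in_split (by omega) hlet hv'len]
          have hle1 : cnt w (1 :: (vt ++ [1])) ≤ 1 := cnt_le_one hinj (by simp [hvtlen]; omega)
          have hle2 : cnt w (2 :: (vt ++ [1])) ≤ 1 := cnt_le_one hinj (by simp [hvtlen]; omega)
          rcases hvh with h | h <;> rw [h] at hkey0 <;> omega
        have hb := balance (w := w) (m := m) (by omega) (by omega) (vt ++ [1])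
        have ho := out_split (w := w) (by omega) hlet hv'len
        have hdropstep : (vt ++ [1]).drop (m - 1 - (j + 1)) = List.replicate (j + 1) 1 := by
          have he1 : m - 1 - (j + 1) = m - 2 - j := by omega
          have he2 : m - 1 - j = (m - 2 - j) + 1 := by omega
          rw [he2, List.drop_succ_cons] at hv3
          rw [he1, List.drop_append_of_le_length (by omega), hv3, List.replicate_succ']
        by_cases hrep : (vt ++ [1]) = List.replicate (m - 1) 1
        · exfalso
          rw [if_pos (by rw [step1, hrep]), if_pos (by rw [hprefix, hrep])] at hb
          have hp1 : 0 < cnt w ((vt ++ [1]) ++ [1]) := by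
            apply cnt_pos_iff.mpr
            rw [hrep, hrepm, ← hseedwin]
            exact win_infix w 0 m
          have hp2 : 0 < cnt w ((vt ++ [1]) ++ [2]) := cnt_pos_iff.mpr (by rw [hrep]; exact h2)
          omega
        · rw [if_neg (by rw [step1]; exact fun hcon => hrep hcon.symm),
            if_neg (by rw [hprefix]; exact fun hcon => hrep hcon.symm)] at hb
          by_cases h2' : cnt w ((vt ++ [1]) ++ [2]) = 0
          · exact ⟨vt ++ [1], hv'len, hv'let, hdropstep, hlemU _ hv'len hrep h2'⟩
          · exact ⟨vt ++ [1], hv'len, hv'let, hdropstep, by omega⟩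
    obtain ⟨v, hv1, _, hv3, hv4⟩ := claim (m - 1) (le_refl _)
    rw [Nat.sub_self, List.drop_zero] at hv3
    rw [hv3, hrepm] at hv4
    omega
  -- length computation
  have hup : w.length ≤ 2 ^ m + m - 1 := winInj_length (by omega) hlet hinj
  have hlo : (Finset.range (2 ^ m)).card ≤ (Finset.range (w.length + 1 - m)).card := by
    apply Finset.card_le_card_of_surjOn (fun p => enc 0 (win w p m))
    intro r hr
    simp only [Finset.coe_range, Set.mem_Iio] at hr
    obtain ⟨l, hl1, hl2, hl3⟩ := enc_surj m r hr
    obtain ⟨p, hple, hpw⟩ := infix_win (complete l hl1 hl2)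
    rw [hl1] at hple hpw
    refine ⟨p, ?_, ?_⟩
    · simp only [Finset.coe_range, Set.mem_Iio]
      omega
    · simp only
      rw [hpw, hl3]
  simp only [Finset.card_range] at hlo
  exact ⟨w, hlet, hinj, by have := Nat.one_le_two_pow (n := m); omega⟩

end DeBruijn


section Final

lemma isPattern_of_win {n : ℕ} (hn : 2 ≤ n) {W : List ℕ} (hlet : TwoLetters W)
    (hinj : WinInj W (n - 1)) {u : List ℕ} (hu : u <:+: W) (hulen : u.length = n) :
    IsPattern u := by
  by_cases h2 : 2 ∈ u
  · have h1 : 1 ∈ u := by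
      by_contra h1
      have hall : ∀ x ∈ u, x = 2 := by
        intro x hx
        rcases hlet x (hu.subset hx) with h | h
        · exact absurd (h ▸ hx) h1
        · exact h
      have hurep : u = List.replicate n 2 := List.eq_replicate_iff.mpr ⟨hulen, hall⟩
      obtain ⟨p, hple, hpw⟩ := infix_win hu
      rw [hulen] at hple hpw
      have hw1 : win W p (n - 1) = List.replicate (n - 1) 2 := by
        rw [← win_take W p (show n - 1 ≤ n by omega), hpw, hurep, List.take_replicate,
          min_eq_left (by omega)]
      have hw2 : win W (p + 1) (n - 1) = List.replicate (n - 1) 2 := by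
        have hd := win_drop W p (show 1 ≤ n by omega)
        rw [hpw, hurep] at hd
        have : (List.replicate n 2).drop 1 = List.replicate (n - 1) 2 := by
          rw [show n = (n - 1) + 1 by omega, List.replicate_succ, List.drop_succ_cons,
            List.drop_zero]
          congr 1
        rw [this] at hd
        rw [← hd]
      have := hinj p (p + 1) (by omega) (by omega) (by rw [hw1, hw2])
      omega
    refine ⟨2, by norm_num, fun x => ⟨fun hx => ?_, fun ⟨ha, hb⟩ => ?_⟩⟩
    · rcases hlet x (hu.subset hx) with h | h <;> omega
    · interval_cases x
      · exact h1
      · exact h2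
  · have hune : u ≠ [] := by
      intro hcon
      rw [hcon] at hulen
      simp at hulen
      omega
    obtain ⟨x, hx⟩ := List.exists_mem_of_ne_nil u hune
    have hx1 : x = 1 := by
      rcases hlet x (hu.subset hx) with h | h
      · exact h
      · exact absurd (h ▸ hx) h2
    refine ⟨1, le_refl _, fun y => ⟨fun hy => ?_, fun ⟨ha, hb⟩ => ?_⟩⟩
    · rcases hlet y (hu.subset hy) with h | h
      · omega
      · exact absurd (h ▸ hy) h2
    · have : y = 1 := by omega
      rw [this, ← hx1]
      exact hx

theorem stmt_10' (n : ℕ) (hn : 2 ≤ n) :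
    IsGreatest {ℓ : ℕ | ∃ S : Set (List ℕ),
      (∀ p ∈ S, p.length = n ∧ PatternOver 2 p) ∧ UnavoidableP n 2 S ∧
      ∃ w : List ℕ, IsNPatternWord n 2 w ∧ (∀ s ∈ S, ¬ s <:+: w) ∧ w.length = ℓ}
      (2 ^ (n - 1) + n - 2) := by
  have hpow : 2 ≤ 2 ^ (n - 1) := by
    calc 2 = 2 ^ 1 := by norm_num
    _ ≤ 2 ^ (n - 1) := Nat.pow_le_pow_right (by norm_num) (by omega)
  constructor
  · -- membership : the de Bruijn construction
    obtain ⟨W, hWlet, hWinj, hWlen⟩ := deBruijn_exists (m := n - 1) (by omega)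
    have hWlen' : W.length = 2 ^ (n - 1) + n - 2 := by omega
    set S : Set (List ℕ) := {p | p.length = n ∧ PatternOver 2 p ∧ ¬ p <:+: W} with hSdef
    have hWpat : IsNPatternWord n 2 W := by
      refine ⟨fun x hx => by rcases hWlet x hx with h | h <;> omega, ?_⟩
      intro u hu hulen
      exact isPattern_of_win hn hWlet hWinj hu hulen
    have hinjn : WinInj W n := by
      intro p q hp hq heq
      refine hWinj p q (by omega) (by omega) ?_
      rw [← win_take W p (show n - 1 ≤ n by omega), ← win_take W q (show n - 1 ≤ n by omega), heq]
    have hUnav : UnavoidableP n 2 S := by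
      apply (finite_bounded_words W.length).subset
      rintro v ⟨hvp, hvavoid⟩
      have hvlet : ∀ x ∈ v, x ≤ 2 := fun x hx => (hvp.1 x hx).2
      refine ⟨?_, hvlet⟩
      -- every n-window of v occurs in W
      have hwin : ∀ i, i + n ≤ v.length →
          ∃ q, q + n ≤ W.length ∧ win W q n = win v i n := by
        intro i hi
        have hulen : (win v i n).length = n := win_length hi
        have huinf : win v i n <:+: v := win_infix v i n
        have hupat : IsPattern (win v i n) := hvp.2 _ huinf hulen
        by_cases hW : win v i n <:+: W
        · obtain ⟨q, hqle, hqw⟩ := infix_win hW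
          rw [hulen] at hqle hqw
          exact ⟨q, hqle, hqw⟩
        · exfalso
          exact hvavoid (win v i n)
            ⟨hulen, ⟨hupat, fun x hx => hvlet x (huinf.subset hx)⟩, hW⟩ huinf
      by_cases hvn : v.length < n
      · omega
      push_neg at hvn
      obtain ⟨q0, hq0le, hq0w⟩ := hwin 0 (by omega)
      have hchain : ∀ i, i + n ≤ v.length → ∀ qi, qi + n ≤ W.length →
          win W qi n = win v i n → qi = q0 + i := by
        intro i
        induction i with
        | zero =>
          intro hi qi hqile hqiw
          rw [Nat.add_zero]
          exact hinjn qi q0 hqile hq0le (by rw [hqiw, hq0w])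
        | succ i ih =>
          intro hi qi hqile hqiw
          obtain ⟨qp, hqple, hqpw⟩ := hwin i (by omega)
          have hqp := ih (by omega) qp hqple hqpw
          have hd1 : win W (qp + 1) (n - 1) = win v (i + 1) (n - 1) := by
            have hdW := win_drop W qp (show 1 ≤ n by omega)
            have hdv := win_drop v i (show 1 ≤ n by omega)
            rw [hqpw] at hdW
            rw [hdv] at hdW
            exact hdW.symm
          have hd2 : win W qi (n - 1) = win v (i + 1) (n - 1) := by
            rw [← win_take W qi (show n - 1 ≤ n by omega), hqiw,
              win_take v (i + 1) (show n - 1 ≤ n by omega)]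
          have := hWinj (qp + 1) qi (by omega) (by omega) (by rw [hd1, hd2])
          omega
      obtain ⟨q, hqle, hqw⟩ := hwin (v.length - n) (by omega)
      have := hchain (v.length - n) (by omega) q hqle hqw
      omega
    refine ⟨S, fun p hp => ⟨hp.1, hp.2.1⟩, hUnav, W, hWpat, fun s hs => hs.2.2, hWlen'⟩
  · -- upper bound
    rintro ℓ ⟨S, hS, hU, w, hw, hav, rfl⟩
    have hinj : WinInj w (n - 1) :=
      winInj_of_unavoidable hn (fun p hp => (hS p hp).1) hU hw hav
    have hlet : TwoLetters w := by
      intro x hx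
      have := hw.1 x hx
      omega
    have := winInj_length (m := n - 1) (by omega) hlet hinj
    omega

end Final

end DB

theorem stmt_10 (n : ℕ) (hn : 2 ≤ n) :
    -- L_p(n,2) = 2^{n-1} + n - 2
    IsGreatest {ℓ : ℕ | ∃ S : Set (List ℕ),
      (∀ p ∈ S, p.length = n ∧ PatternOver 2 p) ∧ UnavoidableP n 2 S ∧
      ∃ w : List ℕ, IsNPatternWord n 2 w ∧ (∀ s ∈ S, ¬ s <:+: w) ∧ w.length = ℓ}
      (2 ^ (n - 1) + n - 2) := DB.stmt_10' n hn
end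

section
/- For every m ≥ 3 and every n ≥ 2, L_p(n,m) < m^{n−1} + n − 2. -/
lemma take_drop_infix (w : List ℕ) (s k : ℕ) : (w.drop s).take k <:+: w :=
  (List.take_prefix k (w.drop s)).isInfix.trans (List.drop_suffix s w).isInfix

lemma infix_to_window {u w : List ℕ} (h : u <:+: w) :
    ∃ s, s + u.length ≤ w.length ∧ u = (w.drop s).take u.length := by
  obtain ⟨x, y, hxy⟩ := h
  refine ⟨x.length, ?_, ?_⟩
  · subst hxy; simp
  · have h1 : w.drop x.length = u ++ y := by
      rw [← hxy, List.append_assoc, List.drop_left]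
    rw [h1, List.take_left]

lemma window_getElem (w : List ℕ) (s k r : ℕ) (h : r < ((w.drop s).take k).length) :
    ((w.drop s).take k)[r] = w.getD (s + r) 0 := by
  have h1 : r < (w.drop s).length := lt_of_lt_of_le h (by simp [List.length_take])
  have h2 : s + r < w.length := by simp [List.length_drop] at h1; omega
  rw [List.getElem_take, List.getElem_drop, List.getD_eq_getElem _ _ h2]

lemma window_length (w : List ℕ) (s k : ℕ) (h : s + k ≤ w.length) :
    ((w.drop s).take k).length = k := by
  simp [List.length_take, List.length_drop]; omega

/-- the pumped letter sequence -/
def pump (w : List ℕ) (i j k : ℕ) : ℕ :=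
  if k < j then w.getD k 0 else w.getD (i + (k - i) % (j - i)) 0

lemma pump_eq_getD (w : List ℕ) (n i j : ℕ) (hij : i < j)
    (hper : ∀ r < n - 1, w.getD (i + r) 0 = w.getD (j + r) 0) :
    ∀ k, k < j + (n - 1) → pump w i j k = w.getD k 0 := by
  intro k
  induction k using Nat.strong_induction_on with
  | _ k IH =>
    intro hk
    by_cases hkj : k < j
    · simp [pump, hkj]
    · push_neg at hkj
      set d := j - i with hd
      have hd1 : 1 ≤ d := by omega
      have hstep : pump w i j k = pump w i j (k - d) := by
        have hki : k - i ≥ d := by omega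
        have hmod : (k - i) % d = ((k - d) - i) % d := by
          rw [Nat.mod_eq_sub_mod hki]; congr 1; omega
        by_cases h2 : k - d < j
        · have : (k - d) - i < d := by omega
          simp only [pump, if_neg (not_lt.mpr hkj), if_pos h2, ← hd, hmod,
            Nat.mod_eq_of_lt this]
          congr 1; omega
        · simp only [pump, if_neg (not_lt.mpr hkj), if_neg h2, ← hd, hmod]
      rw [hstep, IH (k - d) (by omega) (by omega)]
      have hr : k - j < n - 1 := by omega
      have := hper (k - j) hr
      have e1 : i + (k - j) = k - d := by omega
      have e2 : j + (k - j) = k := by omega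
      rw [e1, e2] at this
      exact this

lemma pump_period (w : List ℕ) (i j : ℕ) (hij : i < j) :
    ∀ k, i ≤ k → pump w i j (k + (j - i)) = pump w i j k := by
  intro k hk
  set d := j - i with hd
  have hd1 : 1 ≤ d := by omega
  have h1 : ¬ (k + d < j) := by omega
  have hmod : (k + d - i) % d = (k - i) % d := by
    have : k + d - i = (k - i) + d := by omega
    rw [this, Nat.add_mod_right]
  by_cases h2 : k < j
  · have h3 : k - i < d := by omega
    simp only [pump, if_neg h1, if_pos h2, ← hd, hmod, Nat.mod_eq_of_lt h3]
    congr 1; omega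
  · simp only [pump, if_neg h1, if_neg h2, ← hd, hmod]

lemma pump_period_mul (w : List ℕ) (i j : ℕ) (hij : i < j) :
    ∀ q k, i ≤ k → pump w i j (k + q * (j - i)) = pump w i j k := by
  intro q
  induction q with
  | zero => simp
  | succ q IH =>
    intro k hk
    have e : k + (q + 1) * (j - i) = (k + q * (j - i)) + (j - i) := by ring
    rw [e, pump_period w i j hij _ (by omega), IH k hk]

lemma pump_reduce (w : List ℕ) (i j : ℕ) (hij : i < j) :
    ∀ s, ∃ s', s' < j ∧ ∀ r, pump w i j (s' + r) = pump w i j (s + r) := by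
  intro s
  by_cases hs : s < j
  · exact ⟨s, hs, fun r => rfl⟩
  · push_neg at hs
    set d := j - i with hd
    have hd1 : 1 ≤ d := by omega
    refine ⟨i + (s - i) % d, by have := Nat.mod_lt (s - i) (y := d) (by omega); omega, ?_⟩
    intro r
    have hsplit : s = (i + (s - i) % d) + ((s - i) / d) * d := by
      have := Nat.mod_add_div' (s - i) d
      omega
    have e : s + r = (i + (s - i) % d + r) + ((s - i) / d) * d := by omega
    rw [e, pump_period_mul w i j hij _ _ (by omega)]

lemma pump_entry (w : List ℕ) (i j : ℕ) (hij : i < j) (hj : j ≤ w.length) :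
    ∀ k, ∃ r < w.length, pump w i j k = w.getD r 0 := by
  intro k
  by_cases hk : k < j
  · exact ⟨k, by omega, by simp [pump, hk]⟩
  · refine ⟨i + (k - i) % (j - i), ?_, by simp [pump, hk]⟩
    have := Nat.mod_lt (k - i) (y := j - i) (by omega)
    omega

lemma two_letter (n m : ℕ) (w u : List ℕ) (hm : 3 ≤ m)
    (hw : IsNPatternWord n m w) (hu : u <:+: w) (hl : u.length = n)
    (x : ℕ) (hx : ∀ r (h : r < u.length), u[r] = m ∨ u[r] = x)
    (hmu : m ∈ u) : False := by
  obtain ⟨k, hk1, hk⟩ := hw.2 u hu hl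
  have hsub : ∀ y ∈ u, y ≤ m := fun y hy => (hw.1 y (hu.sublist.subset hy)).2
  have hkm : k ≤ m := hsub k ((hk k).mpr ⟨hk1, le_refl k⟩)
  have hmk : m ≤ k := ((hk m).mp hmu).2
  have h1 : (1 : ℕ) ∈ u := (hk 1).mpr ⟨le_refl 1, by omega⟩
  have h2 : (2 : ℕ) ∈ u := (hk 2).mpr ⟨by omega, by omega⟩
  obtain ⟨r1, hr1, he1⟩ := List.mem_iff_getElem.mp h1
  obtain ⟨r2, hr2, he2⟩ := List.mem_iff_getElem.mp h2
  rcases hx r1 hr1 with h | h <;> rcases hx r2 hr2 with h' | h' <;> omega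

lemma no_const_window (n m : ℕ) (w : List ℕ) (hn : 2 ≤ n) (hm : 3 ≤ m)
    (hw : IsNPatternWord n m w) (hL : n + 1 ≤ w.length)
    (s : ℕ) (hs : s + (n - 1) ≤ w.length)
    (hall : ∀ r < n - 1, w.getD (s + r) 0 = m) : False := by
  by_cases h : s + n ≤ w.length
  · have hlen : ((w.drop s).take n).length = n := window_length w s n h
    refine two_letter n m w _ hm hw (take_drop_infix w s n) hlen
      (w.getD (s + (n - 1)) 0) ?_ ?_
    · intro r hr
      rw [window_getElem w s n r hr]
      by_cases hr1 : r < n - 1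
      · left; exact hall r hr1
      · right; congr 1; rw [hlen] at hr; omega
    · have h0 : (0:ℕ) < ((w.drop s).take n).length := by omega
      have : ((w.drop s).take n)[0] = m := by
        rw [window_getElem w s n 0 h0]
        have := hall 0 (by omega)
        simpa using this
      rw [← this]; exact List.getElem_mem h0
  · have hs1 : 1 ≤ s := by omega
    have hlen : ((w.drop (s - 1)).take n).length = n := window_length w (s - 1) n (by omega)
    refine two_letter n m w _ hm hw (take_drop_infix w (s - 1) n) hlen
      (w.getD (s - 1) 0) ?_ ?_
    · intro r hr
      rw [window_getElem w (s - 1) n r hr]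
      by_cases hr0 : r = 0
      · right; subst hr0; norm_num
      · left
        have e : s - 1 + r = s + (r - 1) := by omega
        rw [e]; exact hall (r - 1) (by rw [hlen] at hr; omega)
    · have h1 : (1:ℕ) < ((w.drop (s - 1)).take n).length := by omega
      have : ((w.drop (s - 1)).take n)[1] = m := by
        rw [window_getElem w (s - 1) n 1 h1]
        have := hall 0 (by omega)
        have e : s - 1 + 1 = s + 0 := by omega
        rw [e]; exact this
      rw [← this]; exact List.getElem_mem h1

theorem stmt_11 (n m : ℕ) (hn : 2 ≤ n) (hm : 3 ≤ m) :
    -- L_p(n,m) < m^{n-1} + n - 2: every S-free n-pattern word over [m],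
    -- for an unavoidable set S of patterns of length n over [m], has length
    -- less than m^{n-1} + n - 2
    ∀ S : Set (List ℕ), (∀ p ∈ S, p.length = n ∧ PatternOver m p) →
      UnavoidableP n m S →
      ∀ w : List ℕ, IsNPatternWord n m w → (∀ s ∈ S, ¬ s <:+: w) →
        w.length < m ^ (n - 1) + n - 2 := by
  classical
  intro S hSpat hSun w hw hfree
  by_contra hlen
  push_neg at hlen
  have hp3 : 3 ≤ m ^ (n - 1) := le_trans hm (by
    calc m = m ^ 1 := (pow_one m).symm
      _ ≤ m ^ (n - 1) := Nat.pow_le_pow_right (by omega) (by omega))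
  have hLn : n + 1 ≤ w.length := by omega
  have hg : ∀ r (h : r < w.length), 1 ≤ w.getD r 0 ∧ w.getD r 0 ≤ m := by
    intro r hr
    have : w.getD r 0 ∈ w := by
      rw [List.getD_eq_getElem _ _ hr]; exact List.getElem_mem hr
    exact hw.1 _ this
  have hgle : ∀ a, w.getD a 0 ≤ m := by
    intro a
    by_cases h : a < w.length
    · exact (hg a h).2
    · rw [List.getD_eq_default _ _ (by omega)]; omega
  -- pigeonhole
  have key : ∀ i j, i < j → j + (n - 1) ≤ w.length →
      (∀ r < n - 1, w.getD (i + r) 0 = w.getD (j + r) 0) → False := by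
    intro i j hij hjL hper
    -- pumped words
    set d := j - i with hd
    have hd1 : 1 ≤ d := by omega
    set W : ℕ → List ℕ := fun t => List.ofFn
      (fun k : Fin (w.length + t * d) => pump w i j k) with hW
    have hWlen : ∀ t, (W t).length = w.length + t * d := fun t => List.length_ofFn
    have hWget : ∀ t r (h : r < (W t).length), (W t)[r] = pump w i j r := by
      intro t r h
      simp only [hW, List.getElem_ofFn]
    have hWinfix : ∀ t (u : List ℕ), u <:+: W t → u.length = n → u <:+: w := by
      intro t u hu hun
      obtain ⟨s, hs, hueq⟩ := infix_to_window hu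
      rw [hWlen] at hs
      obtain ⟨s', hs', hps⟩ := pump_reduce w i j hij s
      have hs'n : s' + n ≤ w.length := by omega
      have : u = (w.drop s').take n := by
        apply List.ext_getElem
        · rw [hun, window_length w s' n hs'n]
        · intro r h1 h2
          have hru : r < u.length := h1
          have e1 : u[r] = pump w i j (s + r) := by
            rw [List.getElem_of_eq hueq hru,
              window_getElem (W t) s u.length r (by rw [← hueq]; exact hru)]
            rw [List.getD_eq_getElem _ _ (by rw [hWlen]; omega), hWget t (s + r) (by rw [hWlen]; omega)]
          rw [e1, ← hps r, pump_eq_getD w n i j hij hper (s' + r) (by omega),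
            window_getElem w s' n r h2]
      rw [this]
      exact take_drop_infix w s' n
    have hWmem : ∀ t, IsNPatternWord n m (W t) ∧ ∀ s ∈ S, ¬ s <:+: W t := by
      intro t
      refine ⟨⟨?_, ?_⟩, ?_⟩
      · intro x hx
        rw [hW] at hx
        simp only [List.mem_ofFn, Set.mem_range] at hx
        obtain ⟨k, hk⟩ := hx
        obtain ⟨r, hr, he⟩ := pump_entry w i j hij (by omega) (k : ℕ)
        rw [← hk, he]
        exact hg r hr
      · intro u hu hun
        exact hw.2 u (hWinfix t u hu hun) hun
      · intro s hs hcon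
        exact hfree s hs (hWinfix t s hcon (hSpat s hs).1)
    have hinf : {w' : List ℕ | IsNPatternWord n m w' ∧ ∀ s ∈ S, ¬ s <:+: w'}.Infinite := by
      refine Set.infinite_of_injective_forall_mem (f := W) ?_ ?_
      · intro t1 t2 h
        have := congrArg List.length h
        rw [hWlen, hWlen] at this
        have h2 : t1 * d = t2 * d := by omega
        exact Nat.eq_of_mul_eq_mul_right (by omega) h2
      · intro t; exact hWmem t
    exact hinf hSun
  -- find repeated window
  set cf : Fin (n - 1) → Fin m := fun _ => ⟨m - 1, by omega⟩ with hcf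
  set F : ℕ → (Fin (n - 1) → Fin m) := fun s r => ⟨w.getD (s + r) 0 - 1, by
    have := hgle (s + r); omega⟩ with hF
  have hmaps : ∀ s ∈ Finset.range (w.length - n + 2), F s ∈ Finset.univ.erase cf := by
    intro s hs
    simp only [Finset.mem_range] at hs
    refine Finset.mem_erase.mpr ⟨?_, Finset.mem_univ _⟩
    intro hFs
    refine no_const_window n m w hn hm hw hLn s (by omega) ?_
    intro r hr
    have h1 := congrFun hFs ⟨r, hr⟩
    rw [hF, hcf] at h1
    simp only [Fin.mk.injEq] at h1
    have h2 := (hg (s + r) (by omega)).1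
    omega
  have hcard : (Finset.univ.erase cf).card < (Finset.range (w.length - n + 2)).card := by
    rw [Finset.card_erase_of_mem (Finset.mem_univ _), Finset.card_univ, Finset.card_range]
    rw [Fintype.card_fun, Fintype.card_fin, Fintype.card_fin]
    omega
  obtain ⟨a, ha, b, hb, hab, hFab⟩ :=
    Finset.exists_ne_map_eq_of_card_lt_of_maps_to hcard hmaps
  simp only [Finset.mem_range] at ha hb
  have hwin : ∀ i j, i < j → j < w.length - n + 2 → F i = F j → False := by
    intro i j hij hj hFij
    refine key i j hij (by omega) ?_
    intro r hr
    have h1 := congrFun hFij ⟨r, hr⟩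
    rw [hF] at h1
    simp only [Fin.mk.injEq] at h1
    have h2 := (hg (i + r) (by omega)).1
    have h3 := (hg (j + r) (by omega)).1
    omega
  rcases lt_or_gt_of_ne hab with h | h
  · exact hwin a b h hb hFab
  · exact hwin b a h ha hFab.symm
end

section
/- For all n, m ≥ 2, C_p(n,m) ≥ Σ_{i=1}^{m} Σ_{a_1 + ··· + a_i = n−1, each a_t ≥ 1} (n−1)! / (a_1! ··· a_i!); that is, C_p(n,m) is at least the number of patterns of length n−1 over [m]. -/
/-- There is an arc (overlap) from `u` to `v`:
`u = a :: w` and `v = w ++ [b]` for some letters `a, b` and word `w`. -/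
def Overlap {α : Type*} (u v : List α) : Prop :=
  ∃ (a b : α) (w : List α), u = a :: w ∧ v = w ++ [b]

/-!
Let `ℓ = n - 1`. The patterns of length `ℓ` over `[m]` are the edges of a multidigraph on words,
the pattern `p` going from `p.dropLast` to `p.tail`. Rotation preserves patterns, so every vertex
has equal in- and out-degree, and every pattern is linked to `1 ⋯ 1` in both directions; hence
there is an Euler circuit: a repetition-free cyclic list of all patterns of length `ℓ` in which
consecutive ones overlap. Cut it open at `1 2 ⋯ 2` and append `2 ⋯ 2`. Gluing consecutive words
of this list gives patterns of length `n` forming a path in the overlap graph, and since the list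
has no repetition the path has no chords. The patterns of length `ℓ` with letters `{1, …, i}` are
the surjections `Fin ℓ → Fin i`, counted by the multinomial coefficients of the compositions of
`ℓ` into `i` parts.
-/

open Finset Relation
open scoped List

section Circuit

variable {α V : Type*}

/-- A trail in the multidigraph with edge set `E`, the edge `e` going from `s e` to `t e`. -/
def IsTrail (s t : α → V) (E : Finset α) (T : List α) : Prop :=
  T.Nodup ∧ (∀ e ∈ T, e ∈ E) ∧ T.IsChain fun e f => t e = s f

def IsCircuit (s t : α → V) (E : Finset α) (T : List α) : Prop :=
  IsTrail s t E T ∧ ∀ a ∈ T.getLast?, ∀ b ∈ T.head?, t a = s b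

variable {s t : α → V} {E : Finset α} {T : List α}

theorem IsTrail.length_le_card (hT : IsTrail s t E T) : T.length ≤ #E := by
  classical
  rw [← List.toFinset_card_of_nodup hT.1]
  exact card_le_card fun e he => hT.2.1 e (List.mem_toFinset.1 he)

theorem IsTrail.perm {T' : List α} (hT : IsTrail s t E T) (hperm : T' ~ T)
    (hchain : T'.IsChain fun e f => t e = s f) : IsTrail s t E T' :=
  ⟨hperm.nodup_iff.2 hT.1, fun e he => hT.2.1 e (hperm.subset he), hchain⟩

theorem IsTrail.concat (hT : IsTrail s t E T) {f : α} (hf : f ∈ E) (hfT : f ∉ T)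
    (hlink : ∀ e ∈ T.getLast?, t e = s f) : IsTrail s t E (T ++ [f]) := by
  refine ⟨?_, ?_, List.isChain_append.2 ⟨hT.2.2, List.isChain_singleton f, by simpa using hlink⟩⟩
  · simpa using hT.1.concat hfT
  · simpa [or_imp, forall_and] using ⟨hT.2.1, hf⟩

theorem exists_isTrail_forall_length_le (s t : α → V) (E : Finset α) :
    ∃ T, IsTrail s t E T ∧ ∀ T', IsTrail s t E T' → T'.length ≤ T.length := by
  let S := {k | ∃ T, IsTrail s t E T ∧ T.length = k}
  have hbdd : BddAbove S := ⟨#E, by rintro _ ⟨T, hT, rfl⟩; exact hT.length_le_card⟩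
  have hne : S.Nonempty := ⟨0, [], by simp [IsTrail], rfl⟩
  obtain ⟨T, hT, hlen⟩ := Nat.sSup_mem hne hbdd
  exact ⟨T, hT, fun T' hT' => hlen ▸ le_csSup hbdd ⟨T', hT', rfl⟩⟩

theorem IsCircuit.exists_perm_getLast? (hC : IsCircuit s t E T) {x : α} (hx : x ∈ T) :
    ∃ T', T' ~ T ∧ IsTrail s t E T' ∧ T'.getLast? = some x := by
  obtain ⟨A, B, rfl⟩ := List.append_of_mem hx
  have hsplit : A ++ x :: B = (A ++ [x]) ++ B := by simp
  obtain ⟨hA, hB, -⟩ := List.isChain_append.1 (hsplit ▸ hC.1.2.2)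
  have hperm : B ++ (A ++ [x]) ~ A ++ x :: B := by rw [hsplit]; exact List.perm_append_comm
  refine ⟨_, hperm, hC.1.perm hperm ?_, by simp⟩
  refine List.isChain_append.2 ⟨hB, hA, fun e he f hf => hC.2 e ?_ f ?_⟩
  · rw [hsplit, List.getLast?_append, Option.mem_def.1 he]
    rfl
  · simpa [List.head?_append] using hf

theorem Relation.ReflTransGen.exists_rel_mem_notMem {r : α → α → Prop} {S : Set α} {a b : α}
    (h : ReflTransGen r a b) (ha : a ∈ S) (hb : b ∉ S) : ∃ x ∈ S, ∃ y ∉ S, r x y := by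
  induction h with
  | refl => exact absurd ha hb
  | @tail c d _ hcd ih =>
    by_cases hc : c ∈ S
    · exact ⟨c, hc, d, hb, hcd⟩
    · exact ih hc

variable [DecidableEq V]

/-- Along a trail each vertex is entered as often as it is left, except at the two ends. -/
theorem List.IsChain.countP_source_add {a : α} {l : List α}
    (h : (a :: l).IsChain fun e f => t e = s f) (v : V) :
    (a :: l).countP (s · = v) +
        (if t ((a :: l).getLast (List.cons_ne_nil a l)) = v then 1 else 0) =
      (a :: l).countP (t · = v) + if s a = v then 1 else 0 := by
  induction l generalizing a with
  | nil =>
    by_cases hs : s a = v <;> by_cases ht : t a = v <;> simp [hs, ht]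
  | cons b l ih =>
    have hab := (List.isChain_cons_cons.1 h).1
    have := ih (List.isChain_cons_cons.1 h).2
    rw [List.getLast_cons (List.cons_ne_nil b l)]
    simp only [List.countP_cons, decide_eq_true_eq] at this ⊢
    rw [hab]
    omega

variable [DecidableEq α]

theorem List.Nodup.countP_eq_card_filter {l : List α} (hl : l.Nodup) (p : α → Prop)
    [DecidablePred p] : l.countP (p ·) = #{e ∈ l.toFinset | p e} := by
  rw [List.countP_eq_length_filter, ← List.toFinset_card_of_nodup (hl.filter _),
    List.toFinset_filter]
  simp

/-- All edges out of the final vertex of a longest trail are used, so by balance the trail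
also starts there. -/
theorem IsTrail.isCircuit_of_forall_length_le
    (hbal : ∀ v, #{e ∈ E | s e = v} = #{e ∈ E | t e = v}) (hT : IsTrail s t E T)
    (hmax : ∀ T', IsTrail s t E T' → T'.length ≤ T.length) : IsCircuit s t E T := by
  refine ⟨hT, ?_⟩
  rcases T with _ | ⟨a, l⟩
  · simp
  set w := t ((a :: l).getLast (List.cons_ne_nil a l))
  have hout : ∀ f ∈ E, s f = w → f ∈ a :: l := by
    intro f hf hsf
    by_contra hfT
    have := hmax _ (hT.concat hf hfT (by simp [List.getLast?_eq_some_getLast, w, hsf]))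
    simp at this
  have hsrc : (a :: l).countP (s · = w) = #{e ∈ E | s e = w} := by
    rw [hT.1.countP_eq_card_filter]
    congr 1
    ext e
    simp only [mem_filter, List.mem_toFinset]
    exact ⟨fun h => ⟨hT.2.1 e h.1, h.2⟩, fun h => ⟨hout e h.1 h.2, h.2⟩⟩
  have htgt : (a :: l).countP (t · = w) ≤ #{e ∈ E | t e = w} := by
    rw [hT.1.countP_eq_card_filter]
    exact card_le_card (filter_subset_filter _ fun e he => hT.2.1 e (List.mem_toFinset.1 he))
  have hcount := hT.2.2.countP_source_add w
  rw [if_pos rfl] at hcount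
  intro x hx y hy
  simp only [List.getLast?_eq_some_getLast (List.cons_ne_nil a l), Option.mem_def,
    Option.some.injEq, List.head?_cons] at hx hy
  subst hx hy
  by_contra hne
  rw [if_neg (Ne.symm hne)] at hcount
  have := hbal w
  omega

/-- Euler's theorem, in the form of a closed trail through every edge, cut open at `e`. -/
theorem exists_isTrail_toFinset_eq (hbal : ∀ v, #{e ∈ E | s e = v} = #{e ∈ E | t e = v})
    (hconn : ∀ e ∈ E, ∀ f ∈ E, ReflTransGen (fun x y => x ∈ E ∧ y ∈ E ∧ t x = s y) e f)
    {e : α} (he : e ∈ E) : ∃ T, IsTrail s t E T ∧ T.toFinset = E ∧ T.getLast? = some e := by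
  obtain ⟨T, hT, hmax⟩ := exists_isTrail_forall_length_le s t E
  have hC := hT.isCircuit_of_forall_length_le hbal hmax
  have hcover : T.toFinset = E := by
    refine Subset.antisymm (fun x hx => hT.2.1 x (List.mem_toFinset.1 hx))
      fun f hf => by_contra fun hfT => ?_
    obtain ⟨a, ha⟩ : ∃ a, a ∈ T := List.exists_mem_of_length_pos <|
      hmax [e] ⟨List.nodup_singleton e, by simpa using he, List.isChain_singleton e⟩
    -- an unused edge `y` leaving the circuit extends a rotation of it
    obtain ⟨x, hxT, y, hyT, -, hyE, hxy⟩ := (hconn a (hT.2.1 a ha) f hf).exists_rel_mem_notMem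
      (S := {x | x ∈ T}) ha (by simpa using hfT)
    obtain ⟨T', hperm, hT', hlast⟩ := hC.exists_perm_getLast? hxT
    have := hmax _ (hT'.concat hyE (fun h => hyT (hperm.subset h)) (by simpa [hlast] using hxy))
    simp [hperm.length_eq] at this
  obtain ⟨T', hperm, hT', hlast⟩ := hC.exists_perm_getLast? (List.mem_toFinset.1 (hcover ▸ he))
  exact ⟨T', hT', List.toFinset_eq_of_perm _ _ hperm ▸ hcover, hlast⟩

end Circuit

section Patterns

variable {ℓ m : ℕ} {p q : List ℕ}

theorem IsPattern.one_mem (hp : IsPattern p) : 1 ∈ p := by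
  obtain ⟨k, hk, hmem⟩ := hp
  exact (hmem 1).2 ⟨le_rfl, hk⟩

theorem PatternOver.of_mem_iff_or {r : List ℕ} (hp : PatternOver m p) (hq : PatternOver m q)
    (h : ∀ x, x ∈ r ↔ x ∈ p ∨ x ∈ q) : PatternOver m r := by
  obtain ⟨⟨k, hk, hpk⟩, hpm⟩ := hp
  obtain ⟨⟨k', -, hqk⟩, hqm⟩ := hq
  refine ⟨⟨max k k', le_max_of_le_left hk, fun x => ?_⟩, fun x hx => ?_⟩
  · rw [h, hpk, hqk]
    omega
  · rcases (h x).1 hx with hx | hx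
    exacts [hpm x hx, hqm x hx]

theorem PatternOver.of_perm (hp : PatternOver m p) (h : p ~ q) : PatternOver m q :=
  hp.of_mem_iff_or hp fun x => by rw [← h.mem_iff, or_self]

theorem patternOver_one_cons_replicate_two (hm : 2 ≤ m) (j : ℕ) :
    PatternOver m (1 :: List.replicate j 2) := by
  refine ⟨⟨if j = 0 then 1 else 2, by split_ifs <;> omega, fun x => ?_⟩, fun x hx => ?_⟩
  · simp only [List.mem_cons, List.mem_replicate]
    split_ifs <;> omega
  · simp only [List.mem_cons, List.mem_replicate] at hx
    omega

theorem finite_setOf_patternOver (ℓ m : ℕ) :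
    {p : List ℕ | p.length = ℓ ∧ PatternOver m p}.Finite := by
  refine (Set.finite_range fun w : Fin ℓ → Fin (m + 1) => List.ofFn fun j => (w j : ℕ)).subset ?_
  rintro p ⟨rfl, -, hpm⟩
  exact ⟨fun j => ⟨p[j], Nat.lt_succ_of_le (hpm _ (List.getElem_mem _))⟩, List.ofFn_getElem⟩

noncomputable def patterns (ℓ m : ℕ) : Finset (List ℕ) :=
  (finite_setOf_patternOver ℓ m).toFinset

theorem mem_patterns : p ∈ patterns ℓ m ↔ p.length = ℓ ∧ PatternOver m p :=
  Set.Finite.mem_toFinset _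

theorem ne_nil_of_mem_patterns (hp : p ∈ patterns ℓ m) : p ≠ [] :=
  List.ne_nil_of_mem (mem_patterns.1 hp).2.1.one_mem

theorem mem_patterns_of_perm (hp : p ∈ patterns ℓ m) (h : p ~ q) : q ∈ patterns ℓ m :=
  mem_patterns.2 ⟨h.length_eq ▸ (mem_patterns.1 hp).1, (mem_patterns.1 hp).2.of_perm h⟩

/-- Two consecutive edges in the graph whose edges are the patterns of length `ℓ` over `[m]`. -/
def PatternStep (ℓ m : ℕ) (x y : List ℕ) : Prop :=
  x ∈ patterns ℓ m ∧ y ∈ patterns ℓ m ∧ x.tail = y.dropLast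

theorem PatternStep.reverse {x y : List ℕ} (h : PatternStep ℓ m x y) :
    PatternStep ℓ m y.reverse x.reverse :=
  ⟨mem_patterns_of_perm h.2.1 (List.reverse_perm y).symm,
    mem_patterns_of_perm h.1 (List.reverse_perm x).symm,
    by rw [List.tail_reverse, List.dropLast_reverse, h.2.2]⟩

theorem patternStep_rotate_one (hp : p ∈ patterns ℓ m) : PatternStep ℓ m p (p.rotate 1) := by
  refine ⟨hp, mem_patterns_of_perm hp (p.rotate_perm 1).symm, ?_⟩
  obtain ⟨a, w, rfl⟩ := List.exists_cons_of_ne_nil (ne_nil_of_mem_patterns hp)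
  simp

theorem reflTransGen_patternStep_rotate (hp : p ∈ patterns ℓ m) (i : ℕ) :
    ReflTransGen (PatternStep ℓ m) p (p.rotate i) := by
  induction i with
  | zero => rw [List.rotate_zero]
  | succ i ih =>
    rw [← List.rotate_rotate]
    exact ih.tail (patternStep_rotate_one (mem_patterns_of_perm hp (p.rotate_perm i).symm))

theorem patternStep_cons_append_one {k : ℕ} {w : List ℕ} (hp : k :: w ∈ patterns ℓ m)
    (hk : ∀ x ∈ w, x ≤ k) (hk2 : 2 ≤ k) : PatternStep ℓ m (k :: w) (w ++ [1]) := by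
  obtain ⟨hlen, ⟨K, hK, hmem⟩, hm⟩ := mem_patterns.1 hp
  have hKk : K = k := by
    refine le_antisymm ?_ ((hmem k).1 List.mem_cons_self).2
    rcases List.mem_cons.1 ((hmem K).2 ⟨hK, le_rfl⟩) with h | h
    exacts [h.le, hk K h]
  subst hKk
  refine ⟨hp, mem_patterns.2 ⟨by simpa using hlen, ⟨if K ∈ w then K else K - 1,
    by split_ifs <;> omega, fun x => ?_⟩, fun x hx => ?_⟩, by simp⟩
  · have := hmem x
    simp only [List.mem_append, List.mem_cons] at this ⊢
    split_ifs <;> grind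
  · simp only [List.mem_append, List.mem_singleton] at hx
    rcases hx with hx | rfl
    · exact hm x (List.mem_cons_of_mem K hx)
    · exact le_trans (by omega) (hm K List.mem_cons_self)

/-- Rotate a largest letter `k` to the front and replace it by a `1` at the back: the letter sum
drops by `k - 1`, until only `1`s are left. -/
theorem reflTransGen_patternStep_replicate_one {ℓ m : ℕ} {p : List ℕ} (hp : p ∈ patterns ℓ m) :
    ReflTransGen (PatternStep ℓ m) p (List.replicate ℓ 1) := by
  obtain ⟨hlen, ⟨k, hk, hmem⟩, -⟩ := mem_patterns.1 hp
  by_cases hk1 : k = 1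
  · have : p = List.replicate ℓ 1 :=
      List.eq_replicate_iff.2 ⟨hlen, fun b hb => by have := (hmem b).1 hb; omega⟩
    rw [this]
  obtain ⟨A, B, rfl⟩ := List.append_of_mem ((hmem k).2 ⟨hk, le_rfl⟩)
  have hrot := reflTransGen_patternStep_rotate hp A.length
  rw [List.rotate_append_length_eq] at hrot
  have hstep := patternStep_cons_append_one (w := B ++ A)
    (mem_patterns_of_perm hp List.perm_append_comm)
    (fun x hx => ((hmem x).1 (by simp at hx ⊢; tauto)).2) (by omega)
  exact (hrot.tail hstep).trans (reflTransGen_patternStep_replicate_one hstep.2.1)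
termination_by p.sum
decreasing_by
  subst_vars
  simp only [List.sum_append, List.sum_cons, List.sum_nil]
  omega

theorem reflTransGen_patternStep_reverse {x y : List ℕ} (h : ReflTransGen (PatternStep ℓ m) x y) :
    ReflTransGen (PatternStep ℓ m) y.reverse x.reverse := by
  induction h with
  | refl => rfl
  | tail _ hbc ih => exact ih.head hbc.reverse

/-- Reversal turns a path to `1 ⋯ 1` into a path from it. -/
theorem reflTransGen_patternStep (hp : p ∈ patterns ℓ m) (hq : q ∈ patterns ℓ m) :
    ReflTransGen (PatternStep ℓ m) p q := by
  have := reflTransGen_patternStep_reverse (reflTransGen_patternStep_replicate_one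
    (mem_patterns_of_perm hq (List.reverse_perm q).symm))
  rw [List.reverse_reverse, List.reverse_replicate] at this
  exact (reflTransGen_patternStep_replicate_one hp).trans this

theorem card_filter_dropLast_patterns (v : List ℕ) :
    #{e ∈ patterns ℓ m | e.dropLast = v} = #{e ∈ patterns ℓ m | e.tail = v} := by
  symm
  refine card_nbij (·.rotate 1) (fun e he => ?_) (fun e _ e' _ h => List.rotate_injective 1 h)
    (fun e he => ?_)
  · obtain ⟨hP, rfl⟩ := mem_filter.1 he
    refine mem_filter.2 ⟨mem_patterns_of_perm hP (e.rotate_perm 1).symm, ?_⟩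
    obtain ⟨a, w, rfl⟩ := List.exists_cons_of_ne_nil (ne_nil_of_mem_patterns hP)
    simp
  · obtain ⟨hP, rfl⟩ := mem_filter.1 he
    obtain ⟨d, c, rfl⟩ : ∃ d c, e = d ++ [c] :=
      ⟨_, _, (List.dropLast_append_getLast (ne_nil_of_mem_patterns hP)).symm⟩
    have hcd := mem_patterns_of_perm hP (List.perm_append_singleton c d)
    exact ⟨c :: d, mem_filter.2 ⟨hcd, by simp⟩, by simp⟩

end Patterns

section Counting

theorem card_filter_fiber_card_eq_multinomial {ι : Type*} [Fintype ι] [DecidableEq ι] (ℓ : ℕ)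
    (a : ι → ℕ) (ha : ∑ t, a t = ℓ) :
    #{w : Fin ℓ → ι | ∀ t, #{j | w j = t} = a t} = Nat.multinomial univ a := by
  -- compare the coefficients of `X ^ a` in `(∑ t, X t) ^ ℓ`, expanded word by word and by the
  -- multinomial theorem
  let X : ι → AddMonoidAlgebra ℕ (ι → ℕ) := fun t => AddMonoidAlgebra.single (Pi.single t 1) 1
  have hwords : (∑ t, X t) ^ ℓ =
      ∑ w : Fin ℓ → ι, AddMonoidAlgebra.single (fun t => #{j | w j = t}) 1 := by
    rw [← Fin.prod_const, prod_univ_sum, Fintype.piFinset_univ]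
    refine sum_congr rfl fun w _ => ?_
    rw [AddMonoidAlgebra.prod_single, prod_const_one]
    congr 1
    ext t
    simp [Finset.sum_apply, Pi.single_apply, eq_comm]
  have hmulti : (∑ t, X t) ^ ℓ =
      ∑ k ∈ piAntidiag univ ℓ, Nat.multinomial univ k • AddMonoidAlgebra.single k 1 := by
    rw [sum_pow_eq_sum_piAntidiag]
    refine sum_congr rfl fun k _ => ?_
    simp only [X, AddMonoidAlgebra.single_pow, one_pow, AddMonoidAlgebra.prod_single,
      prod_const_one, nsmul_eq_mul]
    congr 2
    ext t
    simp [Finset.sum_apply, Pi.single_apply]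
  have hcoeff := congrArg (fun f => f.coeff a) (hwords.symm.trans hmulti)
  simp only [AddMonoidAlgebra.coeff_sum, AddMonoidAlgebra.coeff_smul,
    AddMonoidAlgebra.coeff_single] at hcoeff
  rw [Finset.sum_apply', Finset.sum_apply'] at hcoeff
  simp only [Finsupp.smul_apply, Finsupp.single_apply, smul_eq_mul, mul_boole, sum_boole,
    sum_ite_eq', mem_piAntidiag, ha, Nat.cast_id] at hcoeff
  simpa [funext_iff] using hcoeff

theorem card_surjective_eq_sum_multinomial (i ℓ : ℕ) :
    #{w : Fin ℓ → Fin i | Function.Surjective w} =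
      ∑ a ∈ (Finset.Nat.antidiagonalTuple i ℓ).filter (fun a => ∀ t, 1 ≤ a t),
        Nat.multinomial univ a := by
  rw [card_eq_sum_card_fiberwise (f := fun w t => #{j | w j = t})]
  · refine sum_congr rfl fun a ha => ?_
    obtain ⟨ha, hpos⟩ := mem_filter.1 ha
    refine Eq.trans ?_
      (card_filter_fiber_card_eq_multinomial ℓ a (Finset.Nat.mem_antidiagonalTuple.1 ha))
    congr 1
    ext w
    simp only [mem_filter, mem_univ, true_and, funext_iff, and_iff_right_iff_imp]
    intro h t
    obtain ⟨j, hj⟩ := card_pos.1 (h t ▸ hpos t)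
    exact ⟨j, (mem_filter.1 hj).2⟩
  · intro w hw
    refine mem_filter.2 ⟨Finset.Nat.mem_antidiagonalTuple.2 ?_, fun t => ?_⟩
    · rw [← card_eq_sum_card_fiberwise (fun j _ => mem_univ (w j)), card_univ, Fintype.card_fin]
    · obtain ⟨j, rfl⟩ := (mem_filter.1 hw).2 t
      exact card_pos.2 ⟨j, by simp⟩

theorem mem_ofFn_succ_iff {ℓ i : ℕ} {w : Fin ℓ → Fin i} (hw : Function.Surjective w) (x : ℕ) :
    x ∈ List.ofFn (fun j => (w j : ℕ) + 1) ↔ 1 ≤ x ∧ x ≤ i := by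
  rw [List.mem_ofFn]
  constructor
  · rintro ⟨j, rfl⟩
    have := (w j).isLt
    omega
  · intro hx
    obtain ⟨j, hj⟩ := hw ⟨x - 1, by omega⟩
    exact ⟨j, by simp [hj]; omega⟩

/-- Each summand counts the surjections `Fin ℓ → Fin i` with given fibre sizes; a surjection
`w` is the pattern `(w 0 + 1) ⋯ (w (ℓ - 1) + 1)` with letters `{1, …, i}`. -/
theorem sum_multinomial_le_card_patterns (ℓ m : ℕ) :
    ∑ i ∈ Icc 1 m, ∑ a ∈ (Finset.Nat.antidiagonalTuple i ℓ).filter (fun a => ∀ t, 1 ≤ a t),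
      Nat.multinomial univ a ≤ #(patterns ℓ m) := by
  simp_rw [← card_surjective_eq_sum_multinomial]
  rw [← card_sigma]
  refine card_le_card_of_injOn (fun w => List.ofFn fun j => (w.2 j : ℕ) + 1) ?_ ?_
  · rintro ⟨i, w⟩ hw
    simp only [mem_coe, mem_sigma, mem_Icc, mem_filter, mem_univ, true_and] at hw
    refine mem_patterns.2 ⟨List.length_ofFn, ⟨i, hw.1.1, mem_ofFn_succ_iff hw.2⟩,
      fun x hx => ?_⟩
    exact ((mem_ofFn_succ_iff hw.2 x).1 hx).2.trans hw.1.2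
  · rintro ⟨i, w⟩ hw ⟨i', w'⟩ hw' h
    simp only [mem_coe, mem_sigma, mem_Icc, mem_filter, mem_univ, true_and] at hw hw' h
    have hi : ∀ x, 1 ≤ x ∧ x ≤ i ↔ 1 ≤ x ∧ x ≤ i' := fun x => by
      rw [← mem_ofFn_succ_iff hw.2, ← mem_ofFn_succ_iff hw'.2, h]
    obtain rfl : i = i' := le_antisymm ((hi i).1 ⟨hw.1.1, le_rfl⟩).2 ((hi i').2 ⟨hw'.1.1, le_rfl⟩).2
    have := List.ofFn_injective h
    simp only [Sigma.mk.injEq, heq_eq_eq, true_and]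
    funext j
    exact Fin.ext (by simpa using congrFun this j)

end Counting

section EdgeWord

variable {α : Type*} {U : List (List α)} {i j : ℕ}

/-- The word spelled by the arc from `U[i]` to `U[i + 1]` of a walk `U` in the overlap graph. -/
def edgeWord (U : List (List α)) (i : ℕ) : List α :=
  (U.getD i []).take 1 ++ U.getD (i + 1) []

theorem take_one_append_eq {x y : List α} (hx : x ≠ []) (hy : y ≠ [])
    (h : x.tail = y.dropLast) : x.take 1 ++ y = x ++ [y.getLast hy] := by
  obtain ⟨a, x, rfl⟩ := List.exists_cons_of_ne_nil hx
  conv_lhs => rw [← List.dropLast_append_getLast hy]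
  simp [← h]

theorem edgeWord_eq_cons (hne : ∀ x ∈ U, x ≠ []) (hi : i + 1 < U.length) :
    edgeWord U i = U[i].head (hne _ (List.getElem_mem _)) :: U[i + 1] := by
  rw [edgeWord, List.getD_eq_getElem _ _ (by omega), List.getD_eq_getElem _ _ hi]
  obtain ⟨a, x, hx⟩ := List.exists_cons_of_ne_nil (hne U[i] (List.getElem_mem _))
  simp [hx]

theorem edgeWord_injective (hne : ∀ x ∈ U, x ≠ []) (hnd : U.Nodup) (hi : i + 1 < U.length)
    (hj : j + 1 < U.length) (h : edgeWord U i = edgeWord U j) : i = j := by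
  rw [edgeWord_eq_cons hne hi, edgeWord_eq_cons hne hj, List.cons.injEq] at h
  have := hnd.getElem_inj_iff.1 h.2
  omega

variable (hne : ∀ x ∈ U, x ≠ []) (hch : U.IsChain fun x y => x.tail = y.dropLast)
include hne hch

theorem edgeWord_eq_append (hi : i + 1 < U.length) :
    edgeWord U i = U[i] ++ [U[i + 1].getLast (hne _ (List.getElem_mem _))] := by
  rw [edgeWord, List.getD_eq_getElem _ _ (by omega), List.getD_eq_getElem _ _ hi]
  exact take_one_append_eq (hne _ (List.getElem_mem _)) _ (List.isChain_iff_getElem.1 hch i hi)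

theorem mem_edgeWord (hi : i + 1 < U.length) (a : α) :
    a ∈ edgeWord U i ↔ a ∈ U[i] ∨ a ∈ U[i + 1] := by
  have hsplit := List.dropLast_append_getLast (hne _ (List.getElem_mem hi))
  rw [← List.isChain_iff_getElem.1 hch i hi] at hsplit
  rw [edgeWord_eq_append hne hch hi]
  conv_rhs => rw [← hsplit]
  simp only [List.mem_append, List.mem_singleton]
  have := List.mem_of_mem_tail (a := a) (l := U[i])
  tauto

theorem overlap_edgeWord_succ (hi : i + 2 < U.length) :
    Overlap (edgeWord U i) (edgeWord U (i + 1)) :=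
  ⟨_, _, _, edgeWord_eq_cons hne (by omega), edgeWord_eq_append hne hch hi⟩

theorem not_overlap_edgeWord (hnd : U.Nodup) (hij : i ≤ j) (hj : j + 1 < U.length) :
    ¬ Overlap (edgeWord U j) (edgeWord U i) := by
  rintro ⟨a, b, w, hj', hi'⟩
  rw [edgeWord_eq_cons hne hj, List.cons.injEq] at hj'
  rw [edgeWord_eq_append hne hch (by omega), ← hj'.2] at hi'
  have := (hnd.getElem_inj_iff).1 (List.append_inj_left' hi' rfl)
  omega

end EdgeWord

/-- Cut an Euler circuit of the overlap graph on patterns of length `ℓ` open at `1 2 ⋯ 2` and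
append the non-pattern `2 ⋯ 2`, so that every arc still spells a pattern. -/
theorem exists_walk_edgeWord_patternOver {ℓ m : ℕ} (hℓ : 1 ≤ ℓ) (hm : 2 ≤ m) :
    ∃ U : List (List ℕ), U.length = #(patterns ℓ m) + 1 ∧ U.Nodup ∧ (∀ x ∈ U, x.length = ℓ) ∧
      U.IsChain (fun x y => x.tail = y.dropLast) ∧
      ∀ i, i + 1 < U.length → PatternOver m (edgeWord U i) := by
  have he : 1 :: List.replicate (ℓ - 1) 2 ∈ patterns ℓ m :=
    mem_patterns.2 ⟨by simp; omega, patternOver_one_cons_replicate_two hm _⟩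
  obtain ⟨T, hT, hcover, hlast⟩ := exists_isTrail_toFinset_eq (s := List.dropLast)
    (t := List.tail) card_filter_dropLast_patterns
    (fun _ hx _ hy => reflTransGen_patternStep hx hy) he
  have hrep : List.replicate ℓ 2 ∉ patterns ℓ m := fun h => by
    simpa using (mem_patterns.1 h).2.1.one_mem
  set U := T ++ [List.replicate ℓ 2]
  have hnd : U.Nodup := by simpa [U] using hT.1.concat fun h => hrep (hT.2.1 _ h)
  have hℓU : ∀ x ∈ U, x.length = ℓ := by
    simp only [U, List.mem_append, List.mem_singleton]
    rintro x (hx | rfl)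
    exacts [(mem_patterns.1 (hT.2.1 x hx)).1, List.length_replicate]
  have hne : ∀ x ∈ U, x ≠ [] := fun x hx => List.ne_nil_of_length_pos (by rw [hℓU x hx]; omega)
  have hch : U.IsChain (fun x y => x.tail = y.dropLast) := by
    refine List.isChain_append.2 ⟨hT.2.2, List.isChain_singleton _, fun x hx y hy => ?_⟩
    rw [hlast, Option.mem_some_iff] at hx
    simp only [List.head?_cons, Option.mem_some_iff] at hy
    simp [← hx, ← hy]
  have hpat : ∀ k (hk : k < T.length), U[k]'(by simp [U]; omega) ∈ patterns ℓ m := fun k hk => by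
    simp only [U, List.getElem_append_left hk]
    exact hT.2.1 _ (List.getElem_mem _)
  refine ⟨U, by simp [U, ← List.toFinset_card_of_nodup hT.1, hcover], hnd, hℓU, hch,
    fun i hi => ?_⟩
  by_cases hiT : i + 1 < T.length
  · exact (mem_patterns.1 (hpat i (by omega))).2.of_mem_iff_or (mem_patterns.1 (hpat _ hiT)).2
      (mem_edgeWord hne hch hi)
  obtain ⟨T', rfl⟩ := List.getLast?_eq_some_iff.1 hlast
  obtain rfl : i = T'.length := by simp [U] at hi hiT; omega
  rw [edgeWord_eq_cons hne hi]
  simpa [U] using patternOver_one_cons_replicate_two hm ℓ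

theorem stmt_13 (n m : ℕ) (hn : 2 ≤ n) (hm : 2 ≤ m) :
    -- C_p(n,m) ≥ Σ_{i=1}^{m} Σ_{a_1+⋯+a_i = n-1, a_t ≥ 1} (n-1)!/(a_1!⋯a_i!):
    -- there is a chord-free simple path of patterns of length n over [m],
    -- avoiding loops, with at least that many vertices (the number of
    -- patterns of length n-1 over [m])
    ∃ k : ℕ, ∃ v : Fin k → List ℕ,
      (∀ i, (v i).length = n ∧ PatternOver m (v i)) ∧ Function.Injective v ∧
      (∀ i : Fin k, ∀ h : (i : ℕ) + 1 < k, Overlap (v i) (v ⟨(i : ℕ) + 1, h⟩)) ∧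
      (∀ i j : Fin k, i ≤ j → ¬ Overlap (v j) (v i)) ∧
      (∑ i ∈ Finset.Icc 1 m,
        ∑ a ∈ (Finset.Nat.antidiagonalTuple i (n - 1)).filter
          (fun a => ∀ t, 1 ≤ a t),
          Nat.multinomial Finset.univ a) ≤ k := by
  obtain ⟨U, hlen, hnd, hℓ, hch, hpat⟩ :=
    exists_walk_edgeWord_patternOver (ℓ := n - 1) (by omega) hm
  have hne : ∀ x ∈ U, x ≠ [] := fun x hx => List.ne_nil_of_length_pos (by rw [hℓ x hx]; omega)
  refine ⟨_, fun i => edgeWord U i, fun i => ⟨?_, hpat i (by omega)⟩,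
    fun i j h => Fin.ext (edgeWord_injective hne hnd (by omega) (by omega) h),
    fun i h => overlap_edgeWord_succ hne hch (by omega),
    fun i j hij => not_overlap_edgeWord hne hch hnd hij (by omega),
    sum_multinomial_le_card_patterns _ _⟩
  show (edgeWord U i).length = n
  rw [edgeWord_eq_cons hne (by omega), List.length_cons, hℓ _ (List.getElem_mem _)]
  omega
end

section
/- For all n, m ≥ 1, the graph of pattern overlaps P_n over [m] contains a Hamiltonian circuit: if N is the number of patterns of length n over [m], then there is a bijection f from Z/NZ to the set of patterns of length n over [m] such that for every i ∈ Z/NZ there is an arc from f(i) to f(i+1). -/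
set_option linter.unusedSectionVars false

section Euler

variable {E V : Type*} [DecidableEq E] [DecidableEq V] (s t : E → V)

/-- The step relation of a trail: target of one edge is the source of the next. -/
def Cond (a b : E) : Prop := t a = s b

/-- Closedness in option form. -/
def ClosedT (l : List E) : Prop := ∀ x ∈ l.getLast?, ∀ y ∈ l.head?, t x = s y

lemma chain_count :
    ∀ (l : List E) (hl : l ≠ []), List.Chain' (Cond s t) l → ∀ v : V,
    (l.filter (fun e => s e = v)).length + (if t (l.getLast hl) = v then 1 else 0)
    = (l.filter (fun e => t e = v)).length + (if s (l.head hl) = v then 1 else 0) := by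
  intro l
  induction l with
  | nil => intro h; exact absurd rfl h
  | cons e rest ih =>
    intro _ hc v
    cases rest with
    | nil =>
      by_cases h1 : s e = v <;> by_cases h2 : t e = v <;>
        simp [List.filter_cons, List.filter_nil, List.getLast, h1, h2]
    | cons e' rest' =>
      have hc' : List.Chain' (Cond s t) (e' :: rest') := hc.tail
      have hce : t e = s e' := (List.isChain_cons.mp hc).1 e' rfl
      have IH := ih (by simp) hc' v
      have hlast : (e :: e' :: rest').getLast (by simp) = (e' :: rest').getLast (by simp) := by
        simp [List.getLast]
      rw [hlast]
      have e1 : ((e :: e' :: rest').filter (fun x => decide (s x = v))).length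
          = (if s e = v then 1 else 0)
            + ((e' :: rest').filter (fun x => decide (s x = v))).length := by
        by_cases h : s e = v <;> simp [List.filter_cons, h] <;> omega
      have e2 : ((e :: e' :: rest').filter (fun x => decide (t x = v))).length
          = (if t e = v then 1 else 0)
            + ((e' :: rest').filter (fun x => decide (t x = v))).length := by
        by_cases h : t e = v <;> simp [List.filter_cons, h] <;> omega
      rw [e1, e2]
      simp only [List.head_cons] at IH ⊢
      have h3 : (if s e' = v then 1 else 0) = (if t e = v then 1 else 0 : ℕ) := by
        simp [hce]
      simp only [← hce] at IH
      split_ifs at IH ⊢ <;> simp_all <;> omega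


lemma list_count_le (A : Finset E) (q : E → Prop) [DecidablePred q] (l : List E)
    (hnd : l.Nodup) (hsub : ∀ e ∈ l, e ∈ A) :
    (l.filter (fun e => decide (q e))).length ≤ (A.filter q).card := by
  rw [← List.toFinset_card_of_nodup (hnd.filter _)]
  apply Finset.card_le_card
  intro x hx
  simp only [List.mem_toFinset, List.mem_filter, decide_eq_true_eq] at hx
  exact Finset.mem_filter.mpr ⟨hsub _ hx.1, hx.2⟩

lemma exists_unused (A : Finset E) (q : E → Prop) [DecidablePred q] (l : List E)
    (hnd : l.Nodup)
    (hlt : (l.filter (fun e => decide (q e))).length < (A.filter q).card) :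
    ∃ e, e ∈ A ∧ q e ∧ e ∉ l := by
  by_contra h
  push_neg at h
  have hsub : (A.filter q) ⊆ (l.filter (fun e => decide (q e))).toFinset := by
    intro x hx
    rcases Finset.mem_filter.mp hx with ⟨hxA, hxq⟩
    simp only [List.mem_toFinset, List.mem_filter, decide_eq_true_eq]
    exact ⟨h x hxA hxq, hxq⟩
  have := Finset.card_le_card hsub
  rw [List.toFinset_card_of_nodup (hnd.filter _)] at this
  omega

lemma trail_extend (A : Finset E)
    (hbal : ∀ v, (A.filter (fun e => s e = v)).card = (A.filter (fun e => t e = v)).card) :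
    ∀ (k : ℕ) (l : List E) (hl : l ≠ []),
    A.card ≤ l.length + k → List.Chain' (Cond s t) l → l.Nodup → (∀ e ∈ l, e ∈ A) →
    ∃ (l' : List E) (hl' : l' ≠ []), List.Chain' (Cond s t) l' ∧ l'.Nodup ∧
      (∀ e ∈ l', e ∈ A) ∧ l'.head hl' = l.head hl ∧
      t (l'.getLast hl') = s (l'.head hl') := by
  intro k
  induction k with
  | zero =>
    intro l hl hcard hchain hnd hsub
    by_cases hclosed : t (l.getLast hl) = s (l.head hl)
    · exact ⟨l, hl, hchain, hnd, hsub, rfl, hclosed⟩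
    · exfalso
      set v := t (l.getLast hl) with hv
      have hcc := chain_count s t l hl hchain v
      rw [if_pos rfl, if_neg (fun h => hclosed h.symm)] at hcc
      have h1 : (l.filter (fun e => decide (s e = v))).length
          < (A.filter (fun e => s e = v)).card := by
        have h2 : (l.filter (fun e => decide (t e = v))).length
            ≤ (A.filter (fun e => t e = v)).card :=
          list_count_le A (fun e => t e = v) l hnd hsub
        rw [hbal v]
        omega
      obtain ⟨e, heA, hev, hel⟩ := exists_unused A (fun e => s e = v) l hnd h1
      have hssub : l.toFinset ⊆ A := fun x hx => hsub x (List.mem_toFinset.mp hx)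
      have : l.toFinset ⊂ A := by
        refine ⟨hssub, fun hAs => hel ?_⟩
        exact List.mem_toFinset.mp (hAs heA)
      have := Finset.card_lt_card this
      rw [List.toFinset_card_of_nodup hnd] at this
      omega
  | succ k ih =>
    intro l hl hcard hchain hnd hsub
    by_cases hclosed : t (l.getLast hl) = s (l.head hl)
    · exact ⟨l, hl, hchain, hnd, hsub, rfl, hclosed⟩
    · set v := t (l.getLast hl) with hv
      have hcc := chain_count s t l hl hchain v
      rw [if_pos rfl, if_neg (fun h => hclosed h.symm)] at hcc
      have h1 : (l.filter (fun e => decide (s e = v))).length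
          < (A.filter (fun e => s e = v)).card := by
        have h2 : (l.filter (fun e => decide (t e = v))).length
            ≤ (A.filter (fun e => t e = v)).card :=
          list_count_le A (fun e => t e = v) l hnd hsub
        rw [hbal v]
        omega
      obtain ⟨e, heA, hev, hel⟩ := exists_unused A (fun e => s e = v) l hnd h1
      have hl2 : l ++ [e] ≠ [] := by simp
      have hchain2 : List.Chain' (Cond s t) (l ++ [e]) := by
        refine List.isChain_append.mpr ?_
        refine ⟨hchain, List.isChain_singleton e, ?_⟩
        intro x hx y hy
        rw [List.getLast?_eq_getLast hl, Option.mem_some_iff] at hx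
        simp only [List.head?_cons, Option.mem_some_iff] at hy
        subst hx; subst hy
        exact hev.symm
      have hnd2 : (l ++ [e]).Nodup := by
        rw [List.nodup_append]
        exact ⟨hnd, List.nodup_singleton e, fun x hx y hy hxy => by
          simp only [List.mem_singleton] at hy; subst hy; subst hxy; exact hel hx⟩
      have hsub2 : ∀ x ∈ l ++ [e], x ∈ A := by
        intro x hx
        rcases List.mem_append.mp hx with h | h
        · exact hsub x h
        · simp only [List.mem_singleton] at h; exact h ▸ heA
      have hcard2 : A.card ≤ (l ++ [e]).length + k := by
        simp only [List.length_append, List.length_singleton]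
        omega
      obtain ⟨l', hl', hc', hn', hs', hhead', hclosed'⟩ :=
        ih (l ++ [e]) hl2 hcard2 hchain2 hnd2 hsub2
      refine ⟨l', hl', hc', hn', hs', ?_, hclosed'⟩
      rw [hhead']
      exact List.head_append_of_ne_nil hl

lemma closedT_of (l : List E) (hl : l ≠ []) (h : t (l.getLast hl) = s (l.head hl)) :
    ClosedT s t l := by
  intro x hx y hy
  rw [List.getLast?_eq_getLast hl, Option.mem_some_iff] at hx
  rw [List.head?_eq_head hl, Option.mem_some_iff] at hy
  subst hx; subst hy; exact h

lemma closedT_getLast_head (l : List E) (hl : l ≠ []) (h : ClosedT s t l) :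
    t (l.getLast hl) = s (l.head hl) :=
  h _ (by rw [List.getLast?_eq_getLast hl]; exact Option.mem_some_iff.mpr rfl) _
    (by rw [List.head?_eq_head hl]; exact Option.mem_some_iff.mpr rfl)

lemma rotate_one_good (l : List E) (hc : List.Chain' (Cond s t) l) (hcl : ClosedT s t l) :
    List.Chain' (Cond s t) (l.rotate 1) ∧ ClosedT s t (l.rotate 1) := by
  cases l with
  | nil => rw [List.rotate_nil]; exact ⟨hc, hcl⟩
  | cons a l' =>
    have hrot : (a :: l').rotate 1 = l' ++ [a] := by
      rw [List.rotate_cons_succ, List.rotate_zero]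
    rw [hrot]
    cases l' with
    | nil => exact ⟨hc, hcl⟩
    | cons b l'' =>
      constructor
      · refine List.isChain_append.mpr ?_
        refine ⟨hc.tail, List.isChain_singleton a, ?_⟩
        intro x hx y hy
        simp only [List.head?_cons, Option.mem_some_iff] at hy
        subst hy
        have hx' : x ∈ (a :: b :: l'').getLast? := by
          rwa [List.getLast?_cons_cons]
        exact hcl x hx' a (by simp)
      · intro x hx y hy
        rw [List.getLast?_concat, Option.mem_some_iff] at hx
        subst hx
        have hy' : y = b := by
          simp only [List.cons_append, List.head?_cons, Option.mem_some_iff] at hy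
          exact hy.symm
        rw [hy']
        exact (List.isChain_cons.mp hc).1 b rfl

lemma rotate_good (l : List E) (hc : List.Chain' (Cond s t) l) (hcl : ClosedT s t l) :
    ∀ k, List.Chain' (Cond s t) (l.rotate k) ∧ ClosedT s t (l.rotate k) := by
  intro k
  induction k with
  | zero => rw [List.rotate_zero]; exact ⟨hc, hcl⟩
  | succ k ih =>
    have : l.rotate (k + 1) = (l.rotate k).rotate 1 := by
      rw [List.rotate_rotate]
    rw [this]
    exact rotate_one_good s t _ ih.1 ih.2

lemma getLast_rotate_fin {α : Type*} (l : List α) (i : Fin l.length)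
    (h : l.rotate (i.1 + 1) ≠ []) : (l.rotate (i.1 + 1)).getLast h = l.get i := by
  have hpos : 0 < l.length := lt_of_le_of_lt (Nat.zero_le _) i.isLt
  rw [List.getLast_eq_getElem]; show (l.rotate (i.1 + 1)).get ⟨_, _⟩ = l.get i; rw [List.get_rotate]
  congr 1
  apply Fin.ext
  show ((l.rotate (i.1 + 1)).length - 1 + (i.1 + 1)) % l.length = i.1
  have h1 : (l.rotate (i.1 + 1)).length - 1 + (i.1 + 1) = l.length + i.1 := by
    rw [List.length_rotate]; omega
  rw [h1, Nat.add_mod_left, Nat.mod_eq_of_lt i.isLt]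

lemma hierholzer_aux [Fintype E]
    (hbal : ∀ v, (Finset.univ.filter (fun e => s e = v)).card
      = (Finset.univ.filter (fun e => t e = v)).card)
    (hconn : ∀ e e' : E, ∃ w : List E, List.Chain' (Cond s t) (e :: (w ++ [e']))) :
    ∀ (k : ℕ) (l : List E) (hl : l ≠ []), List.Chain' (Cond s t) l → l.Nodup →
      t (l.getLast hl) = s (l.head hl) → Fintype.card E ≤ l.length + k →
    ∃ (l' : List E) (hl' : l' ≠ []), List.Chain' (Cond s t) l' ∧ l'.Nodup ∧
      (∀ e, e ∈ l') ∧ t (l'.getLast hl') = s (l'.head hl') := by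
  intro k
  induction k with
  | zero =>
    intro l hl hc hnd hclosed hcard
    refine ⟨l, hl, hc, hnd, fun e => ?_, hclosed⟩
    by_contra he
    have hsub : l.toFinset ⊂ Finset.univ :=
      ⟨Finset.subset_univ _, fun hx => he (List.mem_toFinset.mp (hx (Finset.mem_univ e)))⟩
    have := Finset.card_lt_card hsub
    rw [List.toFinset_card_of_nodup hnd, Finset.card_univ] at this
    omega
  | succ k ih =>
    intro l hl hc hnd hclosed hcard
    by_cases hcov : ∀ e : E, e ∈ l
    · exact ⟨l, hl, hc, hnd, hcov, hclosed⟩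
    · push_neg at hcov
      obtain ⟨e', he'⟩ := hcov
      set e := l.head hl with hedef
      have hemem : e ∈ l := List.head_mem hl
      obtain ⟨w, hw⟩ := hconn e e'
      set L := w ++ [e'] with hLdef
      have hdw : L.dropWhile (fun x => decide (x ∈ l)) ≠ [] := by
        intro hnil
        have := List.dropWhile_eq_nil_iff.mp hnil e' (by simp [hLdef])
        simp only [decide_eq_true_eq] at this
        exact he' this
      set g := (L.dropWhile (fun x => decide (x ∈ l))).head hdw with hgdef
      have hgl : g ∉ l := by
        have h := List.head_dropWhile_not (fun x => decide (x ∈ l)) hdw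
        simp only [decide_eq_false_iff_not] at h
        exact h
      -- the previous edge on the trail
      set tw := L.takeWhile (fun x => decide (x ∈ l)) with htwdef
      have hsplit : tw ++ L.dropWhile (fun x => decide (x ∈ l)) = L :=
        List.takeWhile_append_dropWhile
      have hprev_mem : (e :: tw).getLast (List.cons_ne_nil e tw) ∈ l := by
        have hmem := List.getLast_mem (List.cons_ne_nil e tw)
        rcases List.mem_cons.mp hmem with h | h
        · rw [h]; exact hemem
        · have := List.mem_takeWhile_imp (htwdef ▸ h)
          simpa using this
      set prev := (e :: tw).getLast (List.cons_ne_nil e tw) with hprevdef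
      have hlink : t prev = s g := by
        have heq : (e :: tw) ++ L.dropWhile (fun x => decide (x ∈ l)) = e :: L := by
          rw [List.cons_append, hsplit]
        have hC : List.Chain' (Cond s t)
            ((e :: tw) ++ L.dropWhile (fun x => decide (x ∈ l))) := by
          rw [heq]; exact hw
        have junction := (List.isChain_append.mp hC).2.2
        exact junction prev
          (by rw [hprevdef, List.getLast?_eq_getLast (List.cons_ne_nil e tw)]
              exact Option.mem_some_iff.mpr rfl)
          g
          (by rw [hgdef, List.head?_eq_head hdw]; exact Option.mem_some_iff.mpr rfl)
      obtain ⟨i, hi⟩ := List.mem_iff_get.mp hprev_mem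
      set rot := l.rotate (i.1 + 1) with hrotdef
      have hrotlen : rot.length = l.length := List.length_rotate l _
      have hlpos : 0 < l.length := List.length_pos_iff.mpr hl
      have hrot_ne : rot ≠ [] := by
        intro h
        rw [← List.length_eq_zero_iff, hrotlen] at h
        omega
      have hrotgood := rotate_good s t l hc (closedT_of s t l hl hclosed) (i.1 + 1)
      have hrotnd : rot.Nodup := ((List.rotate_perm l (i.1 + 1)).nodup_iff).mpr hnd
      have hrotlast : rot.getLast hrot_ne = prev := by
        rw [← hi]
        exact getLast_rotate_fin l i hrot_ne
      set A := Finset.univ \ l.toFinset with hAdef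
      have hbalA : ∀ v, (A.filter (fun x => s x = v)).card
          = (A.filter (fun x => t x = v)).card := by
        intro v
        have hsd : ∀ (f : E → V), (A.filter (fun x => f x = v))
            = (Finset.univ.filter (fun x => f x = v))
              \ (l.toFinset.filter (fun x => f x = v)) := by
          intro f
          ext x
          simp only [hAdef, Finset.mem_sdiff, Finset.mem_filter, Finset.mem_univ,
            true_and]
          tauto
        have hfs : ∀ (f : E → V), (l.toFinset.filter (fun x => f x = v)).card
            = (l.filter (fun x => decide (f x = v))).length := by
          intro f
          rw [← List.toFinset_card_of_nodup (hnd.filter _)]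
          congr 1
          ext x
          simp only [Finset.mem_filter, List.mem_toFinset, List.mem_filter,
            decide_eq_true_eq]
        have hcc := chain_count s t l hl hc v
        rw [hclosed] at hcc
        have key : (l.filter (fun x => decide (s x = v))).length
            = (l.filter (fun x => decide (t x = v))).length := by
          split_ifs at hcc <;> omega
        rw [hsd s, hsd t,
          Finset.card_sdiff_of_subset (Finset.filter_subset_filter _ (Finset.subset_univ _)),
          Finset.card_sdiff_of_subset (Finset.filter_subset_filter _ (Finset.subset_univ _)),
          hfs s, hfs t, hbal v, key]
      have hgA : g ∈ A :=
        Finset.mem_sdiff.mpr ⟨Finset.mem_univ g,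
          fun hgt => hgl (List.mem_toFinset.mp hgt)⟩
      obtain ⟨c, hcne, hcchain, hcnd, hcsub, hchead, hcclosed⟩ :=
        trail_extend s t A hbalA A.card [g] (by simp) (by simp) (List.isChain_singleton g)
          (List.nodup_singleton g)
          (by intro x hx; rw [List.mem_singleton] at hx; rwa [hx])
      rw [List.head_cons] at hchead
      have hbigne : c ++ rot ≠ [] := by simp [hcne]
      have hsheadrot : t (rot.getLast hrot_ne) = s (rot.head hrot_ne) :=
        closedT_getLast_head s t rot hrot_ne hrotgood.2
      have hbigchain : List.Chain' (Cond s t) (c ++ rot) := by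
        refine List.isChain_append.mpr ?_
        refine ⟨hcchain, hrotgood.1, ?_⟩
        intro x hx y hy
        rw [List.getLast?_eq_getLast hcne, Option.mem_some_iff] at hx
        rw [List.head?_eq_head hrot_ne, Option.mem_some_iff] at hy
        subst hx; subst hy
        show t (c.getLast hcne) = s (rot.head hrot_ne)
        rw [hcclosed, hchead, ← hlink, ← hrotlast, hsheadrot]
      have hbignd : (c ++ rot).Nodup := by
        rw [List.nodup_append]
        refine ⟨hcnd, hrotnd, ?_⟩
        intro x hxc y hxrot hxy
        subst hxy
        have hxA := hcsub x hxc
        rw [hAdef, Finset.mem_sdiff] at hxA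
        exact hxA.2 (List.mem_toFinset.mpr (List.mem_rotate.mp hxrot))
      have hbigclosed : t ((c ++ rot).getLast hbigne) = s ((c ++ rot).head hbigne) := by
        rw [List.getLast_append_of_ne_nil _ hrot_ne, List.head_append_of_ne_nil hcne,
          hchead, hrotlast, hlink]
      have hbigcard : Fintype.card E ≤ (c ++ rot).length + k := by
        rw [List.length_append, hrotlen]
        have := List.length_pos_iff.mpr hcne
        omega
      exact ih (c ++ rot) hbigne hbigchain hbignd hbigclosed hbigcard

lemma get_eq_of_val {α : Type*} (l : List α) (a b : ℕ) (ha : a < l.length)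
    (hb : b < l.length) (h : a = b) : l.get ⟨a, ha⟩ = l.get ⟨b, hb⟩ := by
  subst h; rfl

lemma head_eq_get' {α : Type*} (l : List α) (h : l ≠ []) (h0 : 0 < l.length) :
    l.head h = l.get ⟨0, h0⟩ := by
  cases l with
  | nil => exact absurd rfl h
  | cons a t => rfl

theorem euler_zmod [Fintype E]
    (hne : Nonempty E)
    (hbal : ∀ v, (Finset.univ.filter (fun e => s e = v)).card
      = (Finset.univ.filter (fun e => t e = v)).card)
    (hconn : ∀ e e' : E, ∃ w : List E, List.Chain' (Cond s t) (e :: (w ++ [e']))) :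
    ∃ f : ZMod (Nat.card E) → E, Function.Bijective f ∧ ∀ i, t (f i) = s (f (i + 1)) := by
  classical
  obtain ⟨e₀⟩ := hne
  obtain ⟨l₀, hl₀, hc₀, hnd₀, hsub₀, hh₀, hcl₀⟩ :=
    trail_extend s t Finset.univ hbal Finset.univ.card [e₀] (by simp)
      (Nat.le_add_left _ _) (List.isChain_singleton e₀) (List.nodup_singleton e₀)
      (fun x _ => Finset.mem_univ x)
  obtain ⟨l, hl, hc, hnd, hcov, hclosed⟩ :=
    hierholzer_aux s t hbal hconn (Fintype.card E) l₀ hl₀ hc₀ hnd₀ hcl₀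
      (Nat.le_add_left _ _)
  have hlen : l.length = Nat.card E := by
    rw [Nat.card_eq_fintype_card, ← Finset.card_univ,
      ← List.toFinset_card_of_nodup hnd]
    congr 1
    exact Finset.eq_univ_iff_forall.mpr (fun e => List.mem_toFinset.mpr (hcov e))
  have hNpos : 0 < Nat.card E := by
    rw [← hlen]; exact List.length_pos_iff.mpr hl
  haveI : NeZero (Nat.card E) := ⟨by omega⟩
  have hidx : ∀ i : ZMod (Nat.card E), i.val < l.length := fun i => by
    rw [hlen]; exact ZMod.val_lt i
  have key : ∀ (j : ℕ) (hj : j < l.length) (hj2 : (j + 1) % Nat.card E < l.length),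
      t (l.get ⟨j, hj⟩) = s (l.get ⟨(j + 1) % Nat.card E, hj2⟩) := by
    intro j hj hj2
    by_cases hcase : j + 1 < l.length
    · have hmod : (j + 1) % Nat.card E = j + 1 := Nat.mod_eq_of_lt (by omega)
      rw [get_eq_of_val l _ _ hj2 (by omega) hmod]
      exact List.isChain_iff_getElem.mp hc j (by omega)
    · have hj1 : j + 1 = l.length := by omega
      have hmod : (j + 1) % Nat.card E = 0 := by
        rw [hj1, hlen, Nat.mod_self]
      rw [get_eq_of_val l _ _ hj2 (by omega) hmod]
      have h1 : l.get ⟨j, hj⟩ = l.getLast hl := by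
        rw [List.getLast_eq_getElem]
        exact get_eq_of_val l _ _ hj (by omega) (by omega)
      have h2 : l.get ⟨0, by omega⟩ = l.head hl := (head_eq_get' l hl _).symm
      rw [h1, h2]
      exact hclosed
  refine ⟨fun i => l.get ⟨i.val, hidx i⟩, ⟨?_, ?_⟩, ?_⟩
  · intro i j hij
    have h1 := (List.Nodup.get_inj_iff hnd).mp hij
    have h2 : i.val = j.val := congrArg Fin.val h1
    exact ZMod.val_injective _ h2
  · intro e
    obtain ⟨i, hi⟩ := List.mem_iff_get.mp (hcov e)
    refine ⟨(i.1 : ZMod (Nat.card E)), ?_⟩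
    have hv : ((i.1 : ℕ) : ZMod (Nat.card E)).val = i.1 := by
      rw [ZMod.val_natCast, Nat.mod_eq_of_lt (by rw [← hlen]; exact i.isLt)]
    rw [← hi]
    exact get_eq_of_val l _ _ (hidx _) i.isLt hv
  · intro i
    have hval : (i + 1).val = (i.val + 1) % Nat.card E := by
      rw [ZMod.val_add]
      have h1 : (1 : ZMod (Nat.card E)).val = 1 % Nat.card E := by
        rw [← Nat.cast_one, ZMod.val_natCast]
      rw [h1, Nat.add_mod_mod]
    have := key i.val (hidx i) (by rw [hlen]; exact Nat.mod_lt _ hNpos)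
    rw [this]
    congr 1
    exact get_eq_of_val l _ _ _ (hidx _) hval.symm

end Euler



section Concrete

variable (n m : ℕ)

/-- The type of patterns of length `n` over `[m]`. -/
abbrev Pat := {p : List ℕ // p.length = n ∧ PatternOver m p}

lemma dropLast_reverse' (l : List ℕ) : l.reverse.dropLast = l.tail.reverse := by
  have h := List.tail_reverse (l := l.reverse)
  rw [List.reverse_reverse] at h
  calc l.reverse.dropLast = l.reverse.dropLast.reverse.reverse := by
        rw [List.reverse_reverse]
    _ = l.tail.reverse := by rw [← h]

lemma isPattern_congr {p q : List ℕ} (h : ∀ x, x ∈ p ↔ x ∈ q) (hp : IsPattern p) :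
    IsPattern q := by
  obtain ⟨k, hk, hmem⟩ := hp
  exact ⟨k, hk, fun x => (h x).symm.trans (hmem x)⟩

lemma pat_ne_nil (hn : 1 ≤ n) (p : Pat n m) : p.1 ≠ [] := by
  intro h
  have := p.2.1
  rw [h] at this
  simp at this
  omega

/-- Letters of a pattern are at least 1. -/
lemma pat_one_le {p : List ℕ} (hp : IsPattern p) {x : ℕ} (hx : x ∈ p) : 1 ≤ x := by
  obtain ⟨k, hk, hmem⟩ := hp
  exact ((hmem x).mp hx).1

lemma mem_rotate_iff (a : ℕ) (w : List ℕ) (x : ℕ) : x ∈ a :: w ↔ x ∈ w ++ [a] := by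
  simp [or_comm]

/-- The all-ones pattern. -/
lemma replicate_isPattern (k : ℕ) (hk : 1 ≤ k) : IsPattern (List.replicate k 1) := by
  refine ⟨1, le_refl 1, fun x => ?_⟩
  rw [List.mem_replicate]
  constructor
  · rintro ⟨-, rfl⟩; omega
  · rintro ⟨h1, h2⟩; constructor
    · omega
    · omega

lemma pat_nonempty (hn : 1 ≤ n) (hm : 1 ≤ m) : Nonempty (Pat n m) := by
  refine ⟨⟨List.replicate n 1, by simp, replicate_isPattern n hn, ?_⟩⟩
  intro x hx
  rw [List.mem_replicate] at hx
  omega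

lemma pat_finite : Finite (Pat n m) := by
  apply Finite.of_injective
    (fun (p : Pat n m) (i : Fin n) =>
      (⟨p.1.get ⟨i.1, by rw [p.2.1]; exact i.2⟩, by
        have hmem := List.get_mem p.1 ⟨i.1, by rw [p.2.1]; exact i.2⟩
        exact Nat.lt_succ_of_le (p.2.2.2 _ hmem)⟩ : Fin (m + 1)))
  intro p q h
  apply Subtype.ext
  apply List.ext_get (by rw [p.2.1, q.2.1])
  intro i h1 h2
  have := congrFun h ⟨i, by rw [← p.2.1]; exact h1⟩
  exact congrArg Fin.val this

/-- Maximum letter of a word (at least 1). -/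
def maxL (v : List ℕ) : ℕ := v.foldr max 1

lemma one_le_maxL (v : List ℕ) : 1 ≤ maxL v := by
  induction v with
  | nil => exact le_refl 1
  | cons a w ih => exact le_trans ih (le_max_right a (maxL w))

lemma le_maxL {v : List ℕ} {x : ℕ} (hx : x ∈ v) : x ≤ maxL v := by
  induction v with
  | nil => simp at hx
  | cons a w ih =>
    rcases List.mem_cons.mp hx with h | h
    · rw [h]; exact le_max_left _ _
    · exact le_trans (ih h) (le_max_right _ _)

lemma maxL_le {v : List ℕ} {B : ℕ} (hB : 1 ≤ B) (h : ∀ x ∈ v, x ≤ B) : maxL v ≤ B := by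
  induction v with
  | nil => exact hB
  | cons a w ih =>
    exact max_le (h a List.mem_cons_self) (ih (fun x hx => h x (List.mem_cons_of_mem a hx)))

/-- If the next window is a pattern, the new vertex still has an outgoing edge. -/
lemma next_out (m : ℕ) (hm : 1 ≤ m) (u : List ℕ) (hu : u ≠ []) (b : ℕ)
    (hlet : ∀ x ∈ u, x ≤ m) (hp : IsPattern (u ++ [b])) :
    ∃ c', 1 ≤ c' ∧ c' ≤ m ∧ IsPattern ((u.tail ++ [b]) ++ [c']) := by
  obtain ⟨k, hk, hmem⟩ := hp
  set h := u.head hu with hhdef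
  have hu_eq : h :: u.tail = u := List.cons_head_tail hu
  set w := u.tail ++ [b] with hwdef
  have hsplit : ∀ x : ℕ, x ∈ u ++ [b] ↔ x = h ∨ x ∈ w := by
    intro x
    rw [← hu_eq]
    simp [hwdef, or_assoc]
  have hwsub : ∀ x ∈ w, 1 ≤ x ∧ x ≤ k := by
    intro x hx
    exact (hmem x).mp ((hsplit x).mpr (Or.inr hx))
  have hhk : 1 ≤ h ∧ h ≤ k := (hmem h).mp ((hsplit h).mpr (Or.inl rfl))
  by_cases hh : h ∈ w
  · -- the head letter still occurs: append 1
    refine ⟨1, le_refl 1, hm, k, hk, fun x => ?_⟩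
    have h1k : (1 : ℕ) ≤ k := hk
    constructor
    · intro hx
      rcases List.mem_append.mp hx with hx | hx
      · exact hwsub x hx
      · simp only [List.mem_singleton] at hx
        omega
    · intro hx
      have : x ∈ u ++ [b] := (hmem x).mpr hx
      rcases (hsplit x).mp this with rfl | hxw
      · exact List.mem_append.mpr (Or.inl hh)
      · exact List.mem_append.mpr (Or.inl hxw)
  · -- head letter is gone from the window
    have hwchar : ∀ x : ℕ, x ∈ w ↔ (1 ≤ x ∧ x ≤ k ∧ x ≠ h) := by
      intro x
      constructor
      · intro hx
        have := hwsub x hx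
        exact ⟨this.1, this.2, fun hxe => hh (hxe ▸ hx)⟩
      · rintro ⟨h1, h2, h3⟩
        have : x ∈ u ++ [b] := (hmem x).mpr ⟨h1, h2⟩
        rcases (hsplit x).mp this with rfl | hxw
        · exact absurd rfl h3
        · exact hxw
    by_cases hhk' : h = k
    · -- head letter was the max: window letters are {1..k-1}; append 1
      have hk2 : 2 ≤ k := by
        by_contra hc
        have hk1 : k = 1 := by omega
        have hbmem : b ∈ w := List.mem_append.mpr (Or.inr (List.mem_singleton.mpr rfl))
        have := hwsub b hbmem
        have hb1 : b = 1 := by omega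
        have : b ≠ h := ((hwchar b).mp hbmem).2.2
        omega
      refine ⟨1, le_refl 1, hm, k - 1, by omega, fun x => ?_⟩
      constructor
      · intro hx
        rcases List.mem_append.mp hx with hx | hx
        · have := (hwchar x).mp hx
          omega
        · simp only [List.mem_singleton] at hx
          omega
      · intro hx
        have hxw : x ∈ w := (hwchar x).mpr ⟨by omega, by omega, by omega⟩
        exact List.mem_append.mpr (Or.inl hxw)
    · -- head letter was interior: append it back
      refine ⟨h, hhk.1, hlet h (hu_eq ▸ (List.mem_cons_self : h ∈ h :: u.tail)), k, hk, fun x => ?_⟩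
      constructor
      · intro hx
        rcases List.mem_append.mp hx with hx | hx
        · exact hwsub x hx
        · simp only [List.mem_singleton] at hx
          omega
      · intro hx
        by_cases hxh : x = h
        · exact List.mem_append.mpr (Or.inr (by simp [hxh]))
        · exact List.mem_append.mpr (Or.inl ((hwchar x).mpr ⟨hx.1, hx.2, hxh⟩))

/-- The greedy step: from a vertex with an outgoing edge, choose the smallest legal letter. -/
lemma greedy_step (m : ℕ) (hm : 1 ≤ m) (u : List ℕ) (hu : u ≠ [])
    (hlet : ∀ x ∈ u, 1 ≤ x ∧ x ≤ m)
    (hout : ∃ c, 1 ≤ c ∧ c ≤ m ∧ IsPattern (u ++ [c])) :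
    ∃ b, 1 ≤ b ∧ b ≤ m ∧ IsPattern (u ++ [b]) ∧ (b = 1 ∨ b < maxL u) ∧
      (∃ c', 1 ≤ c' ∧ c' ≤ m ∧ IsPattern ((u.tail ++ [b]) ++ [c'])) := by
  obtain ⟨c, hc1, hcm, hp⟩ := hout
  by_cases h1 : IsPattern (u ++ [1])
  · exact ⟨1, le_refl 1, hm, h1, Or.inl rfl,
      next_out m hm u hu 1 (fun x hx => (hlet x hx).2) h1⟩
  · obtain ⟨k, hk, hmem⟩ := hp
    have hcin : 1 ≤ c ∧ c ≤ k := (hmem c).mp (by simp)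
    have hcnotu : c ∉ u := by
      intro hcu
      apply h1
      refine ⟨k, hk, fun x => ?_⟩
      rw [← hmem x]
      constructor
      · intro hx
        rcases List.mem_append.mp hx with hx | hx
        · exact List.mem_append.mpr (Or.inl hx)
        · simp only [List.mem_singleton] at hx
          subst hx
          have h1k : (1:ℕ) ∈ u ++ [c] := (hmem 1).mpr ⟨le_refl 1, hk⟩
          exact h1k
      · intro hx
        rcases List.mem_append.mp hx with hx | hx
        · exact List.mem_append.mpr (Or.inl hx)
        · simp only [List.mem_singleton] at hx
          subst hx
          exact List.mem_append.mpr (Or.inl hcu)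
    have huchar : ∀ x : ℕ, x ∈ u ↔ (1 ≤ x ∧ x ≤ k ∧ x ≠ c) := by
      intro x
      constructor
      · intro hx
        have := (hmem x).mp (List.mem_append.mpr (Or.inl hx))
        exact ⟨this.1, this.2, fun hxc => hcnotu (hxc ▸ hx)⟩
      · rintro ⟨ha, hb', hc'⟩
        rcases List.mem_append.mp ((hmem x).mpr ⟨ha, hb'⟩) with hx | hx
        · exact hx
        · simp only [List.mem_singleton] at hx
          exact absurd hx hc'
    have hc2 : 2 ≤ c := by
      rcases Nat.lt_or_ge c 2 with h | h
      · have : c = 1 := by omega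
        subst this
        exact absurd (⟨k, hk, hmem⟩ : IsPattern (u ++ [1])) h1
      · exact h
    have hck : c < k := by
      rcases Nat.lt_or_ge c k with h | h
      · exact h
      · exfalso
        have hck' : c = k := by omega
        apply h1
        refine ⟨k - 1, by omega, fun x => ?_⟩
        constructor
        · intro hx
          rcases List.mem_append.mp hx with hx | hx
          · have := (huchar x).mp hx
            omega
          · simp only [List.mem_singleton] at hx
            omega
        · intro hx
          exact List.mem_append.mpr (Or.inl ((huchar x).mpr ⟨by omega, by omega, by omega⟩))
    have hkmem : k ∈ u := (huchar k).mpr ⟨by omega, le_refl k, by omega⟩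
    refine ⟨c, hc1, hcm, ⟨k, hk, hmem⟩, Or.inr (lt_of_lt_of_le hck (le_maxL hkmem)),
      next_out m hm u hu c (fun x hx => (hlet x hx).2) ⟨k, hk, hmem⟩⟩

/-- One overlap step between vertices (words of length `n-1`). -/
def StepV (n m : ℕ) (u v : List ℕ) : Prop :=
  ∃ e : Pat n m, e.1.dropLast = u ∧ e.1.tail = v

/-- Reachability in the overlap graph. -/
def ReachV (n m : ℕ) : List ℕ → List ℕ → Prop := Relation.ReflTransGen (StepV n m)

lemma tail_append_ne_nil {l l' : List ℕ} (h : l ≠ []) : (l ++ l').tail = l.tail ++ l' := by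
  cases l with
  | nil => exact absurd rfl h
  | cons a t => rfl

lemma nat_fix1 {n : ℕ} (h : 2 ≤ n) : n - 1 + 1 = n := by omega

lemma nat_fix2 {n : ℕ} (h : 2 ≤ n) : n - 1 - 1 + 1 = n - 1 := by omega

lemma nat_fix3 {n j : ℕ} (h : j + 1 ≤ n - 1) : 1 + (n - 1 - (j + 1)) = n - 1 - j := by omega

lemma greedy_loop (hm : 1 ≤ m) (hn2 : 2 ≤ n) (v : List ℕ) (hlen : v.length = n - 1)
    (hletters : ∀ x ∈ v, 1 ≤ x ∧ x ≤ m)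
    (hout : ∃ c, 1 ≤ c ∧ c ≤ m ∧ IsPattern (v ++ [c]))
    (M : ℕ) (hM : ∀ x ∈ v, x ≤ M) (hM1 : 1 ≤ M) :
    ∀ j : ℕ, j ≤ n - 1 → ∃ v', ReachV n m v v' ∧ v'.length = n - 1 ∧
      (∀ x ∈ v', 1 ≤ x ∧ x ≤ m) ∧ (∃ c, 1 ≤ c ∧ c ≤ m ∧ IsPattern (v' ++ [c])) ∧
      (∀ x ∈ v', x ≤ M) ∧ (∀ x ∈ v'.drop (n - 1 - j), x ≤ max 1 (M - 1)) := by
  intro j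
  induction j with
  | zero =>
    intro _
    refine ⟨v, Relation.ReflTransGen.refl, hlen, hletters, hout, hM, ?_⟩
    have hdrop : v.drop (n - 1 - 0) = [] := by
      have : n - 1 - 0 = v.length := by omega
      rw [this, List.drop_length]
    rw [hdrop]
    intro x hx
    simp at hx
  | succ j ih =>
    intro hj1
    obtain ⟨w, hreach, hwlen, hwlet, hwout, hwM, hwdrop⟩ := ih (by omega)
    have hwne : w ≠ [] := by
      intro h
      rw [h] at hwlen
      simp at hwlen
      omega
    obtain ⟨b, hb1, hbm, hbpat, hbsmall, hbnext⟩ := greedy_step m hm w hwne hwlet hwout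
    have hblem : b ≤ max 1 (M - 1) := by
      rcases hbsmall with rfl | hlt
      · exact le_max_left _ _
      · have : maxL w ≤ M := maxL_le hM1 hwM
        have : b ≤ M - 1 := by omega
        exact le_trans this (le_max_right _ _)
    have hbM : b ≤ M := by
      have : max 1 (M - 1) ≤ M := by omega
      omega
    -- the edge used in this step
    have helen : (w ++ [b]).length = n := by
      rw [List.length_append, hwlen, List.length_singleton]
      exact nat_fix1 hn2
    have helet : ∀ x ∈ w ++ [b], x ≤ m := by
      intro x hx
      rcases List.mem_append.mp hx with hx | hx
      · exact (hwlet x hx).2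
      · simp only [List.mem_singleton] at hx
        exact hx ▸ hbm
    refine ⟨w.tail ++ [b], ?_, ?_, ?_, ?_, ?_, ?_⟩
    · refine Relation.ReflTransGen.tail hreach ⟨⟨w ++ [b], helen, hbpat, helet⟩, ?_, ?_⟩
      · exact List.dropLast_concat
      · exact tail_append_ne_nil hwne
    · rw [List.length_append, List.length_tail, hwlen, List.length_singleton]
      exact nat_fix2 hn2
    · intro x hx
      rcases List.mem_append.mp hx with hx | hx
      · exact hwlet x (List.mem_of_mem_tail hx)
      · simp only [List.mem_singleton] at hx
        exact ⟨hx ▸ hb1, hx ▸ hbm⟩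
    · exact hbnext
    · intro x hx
      rcases List.mem_append.mp hx with hx | hx
      · exact hwM x (List.mem_of_mem_tail hx)
      · simp only [List.mem_singleton] at hx
        exact hx ▸ hbM
    · intro x hx
      have hsub : n - 1 - (j + 1) ≤ w.tail.length := by
        rw [List.length_tail, hwlen]
        omega
      rw [List.drop_append_of_le_length hsub] at hx
      rcases List.mem_append.mp hx with hx | hx
      · apply hwdrop
        rw [← List.drop_one] at hx
        rw [List.drop_drop] at hx
        rwa [nat_fix3 hj1] at hx
      · simp only [List.mem_singleton] at hx
        exact hx ▸ hblem

lemma reach_ones (hm : 1 ≤ m) (hn : 1 ≤ n) : ∀ (K : ℕ) (v : List ℕ), maxL v ≤ K →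
    v.length = n - 1 → (∀ x ∈ v, 1 ≤ x ∧ x ≤ m) →
    (∃ c, 1 ≤ c ∧ c ≤ m ∧ IsPattern (v ++ [c])) →
    ReachV n m v (List.replicate (n - 1) 1) := by
  intro K
  induction K with
  | zero =>
    intro v hK
    have := one_le_maxL v
    omega
  | succ K ih =>
    intro v hK hlen hlet hout
    by_cases hone : v = List.replicate (n - 1) 1
    · rw [hone]
      exact Relation.ReflTransGen.refl
    · have hn2 : 2 ≤ n := by
        by_contra h
        have hn1 : n = 1 := by omega
        apply hone
        rw [hn1] at hlen ⊢
        simp at hlen ⊢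
        exact hlen
      have hM2 : 2 ≤ maxL v := by
        by_contra h
        apply hone
        rw [List.eq_replicate_iff]
        refine ⟨hlen, fun x hx => ?_⟩
        have h1 := le_maxL hx
        have h2 := (hlet x hx).1
        omega
      obtain ⟨v', hreach, hlen', hlet', hout', _, hdrop'⟩ :=
        greedy_loop n m hm hn2 v hlen hlet hout (maxL v) (fun x hx => le_maxL hx)
          (one_le_maxL v) (n - 1) (le_refl _)
      have hv'bound : ∀ x ∈ v', x ≤ maxL v - 1 := by
        intro x hx
        have h0 : n - 1 - (n - 1) = 0 := by omega
        have := hdrop' x (by rw [h0, List.drop_zero]; exact hx)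
        omega
      have hv'max : maxL v' ≤ K := by
        have := maxL_le (B := maxL v - 1) (by omega) hv'bound
        omega
      exact Relation.ReflTransGen.trans hreach (ih v' hv'max hlen' hlet' hout')

lemma step_rev {u v : List ℕ} (h : StepV n m u v) : StepV n m v.reverse u.reverse := by
  obtain ⟨e, hdl, htl⟩ := h
  refine ⟨⟨e.1.reverse, by simp [e.2.1], ?_, ?_⟩, ?_, ?_⟩
  · exact isPattern_congr (fun x => (List.mem_reverse).symm) e.2.2.1
  · intro x hx
    exact e.2.2.2 x (List.mem_reverse.mp hx)
  · show e.1.reverse.dropLast = v.reverse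
    rw [dropLast_reverse', htl]
  · show e.1.reverse.tail = u.reverse
    rw [List.tail_reverse, hdl]

lemma reach_rev {u v : List ℕ} (h : ReachV n m u v) : ReachV n m v.reverse u.reverse := by
  induction h with
  | refl => exact Relation.ReflTransGen.refl
  | tail _ hbc ih => exact Relation.ReflTransGen.head (step_rev n m hbc) ih

/-- Rotate a pattern: move the last letter to the front. -/
def rotE (hn : 1 ≤ n) (p : Pat n m) : Pat n m :=
  ⟨p.1.getLast (pat_ne_nil n m hn p) :: p.1.dropLast, by
    have hne := pat_ne_nil n m hn p
    have hsplit := List.dropLast_append_getLast hne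
    have hmem : ∀ x, x ∈ p.1 ↔ x ∈ p.1.getLast hne :: p.1.dropLast := by
      intro x
      rw [mem_rotate_iff, hsplit]
    refine ⟨?_, isPattern_congr hmem p.2.2.1, ?_⟩
    · rw [List.length_cons, List.length_dropLast, p.2.1]
      omega
    · intro x hx
      exact p.2.2.2 x ((hmem x).mpr hx)⟩

/-- Rotate a pattern: move the first letter to the end. -/
def rotE' (hn : 1 ≤ n) (p : Pat n m) : Pat n m :=
  ⟨p.1.tail ++ [p.1.head (pat_ne_nil n m hn p)], by
    have hne := pat_ne_nil n m hn p
    have hsplit := List.cons_head_tail hne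
    have hmem : ∀ x, x ∈ p.1 ↔ x ∈ p.1.tail ++ [p.1.head hne] := by
      intro x
      conv_lhs => rw [← hsplit]
      rw [mem_rotate_iff]
    refine ⟨?_, isPattern_congr hmem p.2.2.1, ?_⟩
    · rw [List.length_append, List.length_tail, p.2.1, List.length_singleton]
      omega
    · intro x hx
      exact p.2.2.2 x ((hmem x).mpr hx)⟩

lemma cons_getLast_dropLast (l : List ℕ) (x : ℕ) (h : l ++ [x] ≠ []) :
    ((l ++ [x]).getLast h) :: (l ++ [x]).dropLast = x :: l := by
  rw [List.dropLast_concat]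
  congr 1
  exact List.getLast_concat

lemma pat_balance (hn : 1 ≤ n) [Fintype (Pat n m)] (v : List ℕ) :
    (Finset.univ.filter (fun e : Pat n m => e.1.dropLast = v)).card
      = (Finset.univ.filter (fun e : Pat n m => e.1.tail = v)).card := by
  classical
  refine Finset.card_bij' (fun a _ => rotE n m hn a) (fun a _ => rotE' n m hn a)
    ?_ ?_ ?_ ?_
  · intro a ha
    rw [Finset.mem_filter] at ha ⊢
    refine ⟨Finset.mem_univ _, ?_⟩
    show (a.1.getLast _ :: a.1.dropLast).tail = v
    rw [List.tail_cons]
    exact ha.2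
  · intro a ha
    rw [Finset.mem_filter] at ha ⊢
    refine ⟨Finset.mem_univ _, ?_⟩
    show (a.1.tail ++ [a.1.head _]).dropLast = v
    rw [List.dropLast_concat]
    exact ha.2
  · intro a _
    apply Subtype.ext
    show a.1.dropLast ++ [a.1.getLast (pat_ne_nil n m hn a)] = a.1
    exact List.dropLast_append_getLast _
  · intro a _
    apply Subtype.ext
    show ((a.1.tail ++ [a.1.head (pat_ne_nil n m hn a)]).getLast
        (pat_ne_nil n m hn (rotE' n m hn a)))
      :: (a.1.tail ++ [a.1.head (pat_ne_nil n m hn a)]).dropLast = a.1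
    refine (cons_getLast_dropLast _ _ _).trans ?_
    exact List.cons_head_tail _

/-- A vertex which is the tail of an edge has an outgoing edge. -/
lemma out_of_edge (hn : 1 ≤ n) (e : Pat n m) :
    ∃ c, 1 ≤ c ∧ c ≤ m ∧ IsPattern (e.1.tail ++ [c]) := by
  have hne := pat_ne_nil n m hn e
  have hsplit := List.cons_head_tail hne
  refine ⟨e.1.head hne, ?_, ?_, ?_⟩
  · exact pat_one_le e.2.2.1 (List.head_mem hne)
  · exact e.2.2.2 _ (List.head_mem hne)
  · apply isPattern_congr _ e.2.2.1
    intro x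
    conv_lhs => rw [← hsplit]
    rw [mem_rotate_iff]

lemma reach_chain {u v : List ℕ} (h : ReachV n m u v) :
    ∀ (e₀ : Pat n m), e₀.1.tail = u → ∀ (e₁ : Pat n m), e₁.1.dropLast = v →
    ∃ W : List (Pat n m), List.Chain'
      (Cond (fun p : Pat n m => p.1.dropLast) (fun p : Pat n m => p.1.tail))
      (e₀ :: (W ++ [e₁])) := by
  induction h using Relation.ReflTransGen.head_induction_on with
  | refl =>
    intro e₀ h₀ e₁ h₁
    refine ⟨[], ?_⟩
    simp only [List.nil_append]
    refine List.isChain_pair.mpr ?_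
    show e₀.1.tail = e₁.1.dropLast
    rw [h₀, h₁]
  | head hstep _ ih =>
    intro e₀ h₀ e₁ h₁
    obtain ⟨g, hgd, hgt⟩ := hstep
    obtain ⟨W', hW'⟩ := ih g hgt e₁ h₁
    refine ⟨g :: W', ?_⟩
    simp only [List.cons_append] at hW' ⊢
    refine List.isChain_cons.mpr ?_
    refine ⟨?_, hW'⟩
    intro y hy
    simp only [List.head?_cons, Option.mem_some_iff] at hy
    subst hy
    show e₀.1.tail = g.1.dropLast
    rw [h₀, hgd]

lemma pat_conn (hn : 1 ≤ n) (hm : 1 ≤ m) (e e' : Pat n m) :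
    ∃ W : List (Pat n m), List.Chain'
      (Cond (fun p : Pat n m => p.1.dropLast) (fun p : Pat n m => p.1.tail))
      (e :: (W ++ [e'])) := by
  have htail_len : e.1.tail.length = n - 1 := by
    rw [List.length_tail, e.2.1]
  have htail_let : ∀ x ∈ e.1.tail, 1 ≤ x ∧ x ≤ m := by
    intro x hx
    exact ⟨pat_one_le e.2.2.1 (List.mem_of_mem_tail hx),
      e.2.2.2 x (List.mem_of_mem_tail hx)⟩
  have h1 : ReachV n m e.1.tail (List.replicate (n - 1) 1) :=
    reach_ones n m hm hn (maxL e.1.tail) e.1.tail (le_refl _) htail_len htail_let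
      (out_of_edge n m hn e)
  -- reversed edge
  have hrevmem : ∀ x, x ∈ e'.1.reverse ↔ x ∈ e'.1 := fun x => List.mem_reverse
  set erev : Pat n m := ⟨e'.1.reverse, by simp [e'.2.1],
    isPattern_congr (fun x => (hrevmem x).symm) e'.2.2.1,
    fun x hx => e'.2.2.2 x ((hrevmem x).mp hx)⟩ with herev
  have h2 : ReachV n m erev.1.tail (List.replicate (n - 1) 1) := by
    apply reach_ones n m hm hn (maxL erev.1.tail) erev.1.tail (le_refl _)
    · rw [List.length_tail]
      show e'.1.reverse.length - 1 = n - 1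
      rw [List.length_reverse, e'.2.1]
    · intro x hx
      exact ⟨pat_one_le erev.2.2.1 (List.mem_of_mem_tail hx),
        erev.2.2.2 x (List.mem_of_mem_tail hx)⟩
    · exact out_of_edge n m hn erev
  have h2' : erev.1.tail = e'.1.dropLast.reverse := by
    show e'.1.reverse.tail = e'.1.dropLast.reverse
    rw [List.tail_reverse]
  rw [h2'] at h2
  have h3 := reach_rev n m h2
  rw [List.reverse_replicate, List.reverse_reverse] at h3
  exact reach_chain n m (Relation.ReflTransGen.trans h1 h3) e rfl e' rfl

end Concrete

theorem stmt_14 (n m : ℕ) (hn : 1 ≤ n) (hm : 1 ≤ m) :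
    -- the graph of pattern overlaps P_n over [m] has a Hamiltonian circuit
    ∃ f : ZMod (Nat.card {p : List ℕ // p.length = n ∧ PatternOver m p}) →
        {p : List ℕ // p.length = n ∧ PatternOver m p},
      Function.Bijective f ∧ ∀ i, Overlap (f i : List ℕ) (f (i + 1) : List ℕ) := by
  classical
  haveI : Finite (Pat n m) := pat_finite n m
  haveI : Fintype (Pat n m) := Fintype.ofFinite _
  obtain ⟨f, hbij, hadj⟩ := euler_zmod (fun p : Pat n m => p.1.dropLast)
    (fun p : Pat n m => p.1.tail) (pat_nonempty n m hn hm)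
    (fun v => pat_balance n m hn v)
    (fun e e' => pat_conn n m hn hm e e')
  refine ⟨f, hbij, fun i => ?_⟩
  have h := hadj i
  refine ⟨(f i).1.head (pat_ne_nil n m hn _), (f (i + 1)).1.getLast (pat_ne_nil n m hn _),
    (f i).1.tail, (List.cons_head_tail _).symm, ?_⟩
  rw [h]
  exact (List.dropLast_append_getLast _).symm
end

section
/- For all n, m ≥ 1, the graph of pattern overlaps P_n over [m] is strongly connected: for any two patterns X and Y of length n over [m], there exist k ≥ 0 and patterns v_0 = X, v_1, ..., v_k = Y of length n over [m] such that for each 0 ≤ t < k there is an arc from v_t to v_{t+1}. -/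
section Stmt15Aux

/-- If membership is the same, `IsPattern` transfers. -/
lemma isPattern_of_mem_iff {u v : List ℕ} (h : IsPattern u)
    (hmm : ∀ x, x ∈ v ↔ x ∈ u) : IsPattern v := by
  obtain ⟨k, hk, hu⟩ := h
  exact ⟨k, hk, fun x => (hmm x).trans (hu x)⟩

lemma pat_aux (s : List ℕ) (k : ℕ) (hk : 2 ≤ k)
    (hb : ∀ x ∈ s, 1 ≤ x ∧ x ≤ k) (hc : ∀ x, 1 ≤ x → x ≤ k - 1 → x ∈ s) :
    ∃ k', 1 ≤ k' ∧ ∀ x, (x ∈ s ∨ x = 1) ↔ (1 ≤ x ∧ x ≤ k') := by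
  by_cases hks : k ∈ s
  · refine ⟨k, by omega, fun x => ⟨?_, ?_⟩⟩
    · rintro (hx | rfl)
      · exact hb x hx
      · omega
    · rintro ⟨h1, h2⟩
      by_cases hxk : x = k
      · exact Or.inl (hxk ▸ hks)
      · exact Or.inl (hc x h1 (by omega))
  · refine ⟨k - 1, by omega, fun x => ⟨?_, ?_⟩⟩
    · rintro (hx | rfl)
      · have := hb x hx
        have : x ≠ k := fun h => hks (h ▸ hx)
        have := hb x hx
        omega
      · omega
    · rintro ⟨h1, h2⟩
      exact Or.inl (hc x h1 h2)

variable {n m : ℕ}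

/-- One rotation step is an arc in the graph. -/
lemma step_rotate_one (hn : 1 ≤ n) {u : List ℕ} (h1 : u.length = n) (h2 : PatternOver m u) :
    ((u.rotate 1).length = n ∧ PatternOver m (u.rotate 1)) ∧ Overlap u (u.rotate 1) := by
  have hne : u ≠ [] := by intro h; rw [h] at h1; simp at h1; omega
  obtain ⟨a, t, rfl⟩ := List.exists_cons_of_ne_nil hne
  have hrot : (a :: t).rotate 1 = t ++ [a] := by
    simpa using List.rotate_cons_succ t a 0
  refine ⟨⟨by simp [← h1], ?_, fun x hx => h2.2 x (List.mem_rotate.1 hx)⟩,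
    ⟨a, a, t, rfl, hrot⟩⟩
  exact isPattern_of_mem_iff h2.1 (fun x => List.mem_rotate)

lemma reach_rotate (hn : 1 ≤ n) {u : List ℕ} (h1 : u.length = n) (h2 : PatternOver m u)
    (j : ℕ) :
    Relation.ReflTransGen
      (fun u v : List ℕ => (v.length = n ∧ PatternOver m v) ∧ Overlap u v)
      u (u.rotate j) := by
  induction j with
  | zero => simpa using Relation.ReflTransGen.refl
  | succ j ih =>
    have hg := step_rotate_one (m := m) hn h1 h2
    -- properties of u.rotate j
    have h1' : (u.rotate j).length = n := by simp [h1]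
    have h2' : PatternOver m (u.rotate j) :=
      ⟨isPattern_of_mem_iff h2.1 (fun x => List.mem_rotate),
        fun x hx => h2.2 x (List.mem_rotate.1 hx)⟩
    have hstep := step_rotate_one (m := m) hn h1' h2'
    rw [List.rotate_rotate] at hstep
    exact ih.tail hstep

/-- Every pattern of length n over [m] reaches 1^n. -/
lemma reach_ones_s15 (hn : 1 ≤ n) (hm : 1 ≤ m) :
    ∀ N u, u.sum = N → u.length = n → PatternOver m u →
      Relation.ReflTransGen
        (fun u v : List ℕ => (v.length = n ∧ PatternOver m v) ∧ Overlap u v)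
        u (List.replicate n 1) := by
  intro N
  induction N using Nat.strong_induction_on with
  | _ N ih =>
    intro u hsum h1 h2
    obtain ⟨⟨k, hk1, hmem⟩, hbound⟩ := h2
    by_cases hk2 : k = 1
    · have : u = List.replicate n 1 :=
        List.eq_replicate_iff.2 ⟨h1, fun b hb => by have := (hmem b).1 hb; omega⟩
      rw [this]
    · have hk2' : 2 ≤ k := by omega
      have hkmem : k ∈ u := (hmem k).2 ⟨hk1, le_refl k⟩
      obtain ⟨i, hi, hik⟩ := List.getElem_of_mem hkmem
      set s : List ℕ := u.drop (i + 1) ++ u.take i with hs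
      have h2' : PatternOver m u := ⟨⟨k, hk1, hmem⟩, hbound⟩
      have hri : u.rotate i = k :: s := by
        rw [List.rotate_eq_drop_append_take (le_of_lt hi),
          List.drop_eq_getElem_cons hi, hik, hs, List.cons_append]
      -- membership in s
      have hmem_s : ∀ x ∈ s, x ∈ u := by
        intro x hx
        have : x ∈ u.rotate i := by rw [hri]; exact List.mem_cons_of_mem _ hx
        exact List.mem_rotate.1 this
      have hmem_s' : ∀ x, 1 ≤ x → x ≤ k - 1 → x ∈ s := by
        intro x hx1 hx2
        have hxu : x ∈ u := (hmem x).2 ⟨hx1, by omega⟩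
        have : x ∈ u.rotate i := List.mem_rotate.2 hxu
        rw [hri] at this
        rcases List.mem_cons.1 this with h | h
        · omega
        · exact h
      -- the new word
      set w : List ℕ := s ++ [1] with hw
      have hmem_w : ∀ x, x ∈ w ↔ (x ∈ s ∨ x = 1) := by
        intro x; simp [hw]
      obtain ⟨k', hk'1, hk'⟩ := pat_aux s k hk2'
        (fun x hx => ((hmem x).1 (hmem_s x hx)).imp id (fun h => h))
        hmem_s'
      have hslen : s.length + 1 = n := by
        have : (u.rotate i).length = n := by simp [h1]
        rw [hri] at this
        simpa using this
      have hwlen : w.length = n := by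
        rw [hw]; simp; omega
      have hwpat : PatternOver m w :=
        ⟨⟨k', hk'1, fun x => (hmem_w x).trans (hk' x)⟩,
          by
            intro x hx
            rcases (hmem_w x).1 hx with h | rfl
            · exact hbound x (hmem_s x h)
            · exact hm⟩
      -- sums
      have hsum_rot : (u.rotate i).sum = u.sum := (List.rotate_perm u i).sum_eq
      have hsum_r : u.sum = k + s.sum := by rw [← hsum_rot, hri]; simp
      have hsum_w : w.sum = s.sum + 1 := by simp [hw]
      have hlt : w.sum < N := by omega
      -- path: u →* u.rotate i → w →* 1^n
      have step1 : Relation.ReflTransGen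
          (fun u v : List ℕ => (v.length = n ∧ PatternOver m v) ∧ Overlap u v)
          u (u.rotate i) := reach_rotate hn h1 h2' i
      have step2 : Relation.ReflTransGen
          (fun u v : List ℕ => (v.length = n ∧ PatternOver m v) ∧ Overlap u v)
          u w := step1.tail ⟨⟨hwlen, hwpat⟩, ⟨k, 1, s, hri, rfl⟩⟩
      exact step2.trans (ih w.sum hlt w rfl hwlen hwpat)

/-- 1^n reaches every pattern of length n over [m]. -/
lemma ones_reach (hn : 1 ≤ n) (hm : 1 ≤ m) :
    ∀ N v, v.sum = N → v.length = n → PatternOver m v →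
      Relation.ReflTransGen
        (fun u v : List ℕ => (v.length = n ∧ PatternOver m v) ∧ Overlap u v)
        (List.replicate n 1) v := by
  intro N
  induction N using Nat.strong_induction_on with
  | _ N ih =>
    intro v hsum h1 h2
    obtain ⟨⟨k, hk1, hmem⟩, hbound⟩ := h2
    by_cases hk2 : k = 1
    · have : v = List.replicate n 1 :=
        List.eq_replicate_iff.2 ⟨h1, fun b hb => by have := (hmem b).1 hb; omega⟩
      rw [this]
    · have hk2' : 2 ≤ k := by omega
      have hkmem : k ∈ v := (hmem k).2 ⟨hk1, le_refl k⟩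
      obtain ⟨i, hi, hik⟩ := List.getElem_of_mem hkmem
      set s : List ℕ := v.drop (i + 1) ++ v.take i with hs
      have h2' : PatternOver m v := ⟨⟨k, hk1, hmem⟩, hbound⟩
      have hri : v.rotate i = k :: s := by
        rw [List.rotate_eq_drop_append_take (le_of_lt hi),
          List.drop_eq_getElem_cons hi, hik, hs, List.cons_append]
      have hri1 : v.rotate (i + 1) = s ++ [k] := by
        rw [List.rotate_eq_drop_append_take hi, ← List.take_concat_get hi, hik, hs]
        simp [List.concat_eq_append, List.append_assoc]
      have hmem_s : ∀ x ∈ s, x ∈ v := by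
        intro x hx
        have : x ∈ v.rotate i := by rw [hri]; exact List.mem_cons_of_mem _ hx
        exact List.mem_rotate.1 this
      have hmem_s' : ∀ x, 1 ≤ x → x ≤ k - 1 → x ∈ s := by
        intro x hx1 hx2
        have hxv : x ∈ v := (hmem x).2 ⟨hx1, by omega⟩
        have : x ∈ v.rotate i := List.mem_rotate.2 hxv
        rw [hri] at this
        rcases List.mem_cons.1 this with h | h
        · omega
        · exact h
      -- the predecessor word
      set p : List ℕ := 1 :: s with hp
      have hmem_p : ∀ x, x ∈ p ↔ (x ∈ s ∨ x = 1) := by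
        intro x; simp [hp]; tauto
      obtain ⟨k', hk'1, hk'⟩ := pat_aux s k hk2'
        (fun x hx => ((hmem x).1 (hmem_s x hx)).imp id (fun h => h))
        hmem_s'
      have hslen : s.length + 1 = n := by
        have : (v.rotate i).length = n := by simp [h1]
        rw [hri] at this
        simpa using this
      have hplen : p.length = n := by simp [hp]; omega
      have hppat : PatternOver m p :=
        ⟨⟨k', hk'1, fun x => (hmem_p x).trans (hk' x)⟩,
          by
            intro x hx
            rcases (hmem_p x).1 hx with h | rfl
            · exact hbound x (hmem_s x h)
            · exact hm⟩
      have hsum_rot : (v.rotate i).sum = v.sum := (List.rotate_perm v i).sum_eq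
      have hsum_r : v.sum = k + s.sum := by rw [← hsum_rot, hri]; simp
      have hsum_p : p.sum = 1 + s.sum := by simp [hp]
      have hlt : p.sum < N := by omega
      -- path: 1^n →* p → v.rotate (i+1) →* v
      have step1 : Relation.ReflTransGen
          (fun u v : List ℕ => (v.length = n ∧ PatternOver m v) ∧ Overlap u v)
          (List.replicate n 1) p := ih p.sum hlt p rfl hplen hppat
      have hrlen : (v.rotate (i + 1)).length = n := by simp [h1]
      have hrpat : PatternOver m (v.rotate (i + 1)) :=
        ⟨isPattern_of_mem_iff ⟨k, hk1, hmem⟩ (fun x => List.mem_rotate),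
          fun x hx => hbound x (List.mem_rotate.1 hx)⟩
      have step2 : Relation.ReflTransGen
          (fun u v : List ℕ => (v.length = n ∧ PatternOver m v) ∧ Overlap u v)
          (List.replicate n 1) (v.rotate (i + 1)) :=
        step1.tail ⟨⟨hrlen, hrpat⟩, ⟨1, k, s, rfl, hri1⟩⟩
      have step3 : Relation.ReflTransGen
          (fun u v : List ℕ => (v.length = n ∧ PatternOver m v) ∧ Overlap u v)
          (v.rotate (i + 1)) v := by
        have := reach_rotate (m := m) hn hrlen hrpat (n - (i + 1))
        rw [List.rotate_rotate] at this
        have heq : i + 1 + (n - (i + 1)) = n := by omega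
        have hvn : v.rotate n = v := by rw [← h1]; exact List.rotate_length v
        rw [heq, hvn] at this
        exact this
      exact (step2.trans step3)

end Stmt15Aux

theorem stmt_15 (n m : ℕ) (hn : 1 ≤ n) (hm : 1 ≤ m)
    (X Y : List ℕ) (hX : X.length = n ∧ PatternOver m X)
    (hY : Y.length = n ∧ PatternOver m Y) :
    -- the graph of pattern overlaps P_n over [m] is strongly connected:
    -- there is a directed path from X to Y through patterns of length n over [m]
    Relation.ReflTransGen
      (fun u v : List ℕ => (v.length = n ∧ PatternOver m v) ∧ Overlap u v) X Y := by
  exact (reach_ones_s15 hn hm X.sum X rfl hX.1 hX.2).trans (ones_reach hn hm Y.sum Y rfl hY.1 hY.2)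
end
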